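/- arXiv:2404.17067 — 10 statements merged into one kernel-verified Lean document; each statement's English description precedes it below -/
import Mathlib

section
/- Let F be a field of characteristic two, x₁,…,x_r column vectors in Fⁿ, and suppose A and B := A + Σᵢ xᵢxᵢᵀ are both invertible symmetric n×n matrices over F. Then xᵢᵀ A⁻¹ xᵢ = 1 for all i if and only if xᵢᵀ B⁻¹ xᵢ = 1 for all i. -/
open Matrix

private lemma add_self_mat {F : Type*} [Field F] [CharP F 2] {m k : ℕ}
    (M : Matrix (Fin m) (Fin k) F) : M + M = 0 := by
  ext i j
  simp [Matrix.add_apply, CharTwo.add_self_eq_zero]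

private lemma alt_quad {F : Type*} [Field F] [CharP F 2] {r : ℕ}
    (H : Matrix (Fin r) (Fin r) F) (hs : H.IsSymm) (hd : ∀ i, H i i = 0)
    (v : Fin r → F) : v ⬝ᵥ H *ᵥ v = 0 := by
  have hrw : v ⬝ᵥ H *ᵥ v
      = ∑ p ∈ (Finset.univ ×ˢ Finset.univ : Finset (Fin r × Fin r)),
        v p.1 * H p.1 p.2 * v p.2 := by
    rw [Finset.sum_product]
    simp [dotProduct, Matrix.mulVec, Finset.mul_sum, mul_assoc]
  rw [hrw]
  refine Finset.sum_ninvolution (fun p => (p.2, p.1)) ?_ ?_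
    (fun p => Finset.mem_product.2 ⟨Finset.mem_univ _, Finset.mem_univ _⟩)
    (fun p => rfl)
  · intro p
    have hsym : H p.2 p.1 = H p.1 p.2 := hs.apply p.1 p.2
    simp only [hsym]
    have := CharTwo.add_self_eq_zero (v p.1 * H p.1 p.2 * v p.2)
    linear_combination this
  · intro p hf hpe
    apply hf
    have h1 : p.2 = p.1 := congrArg Prod.fst hpe
    rw [h1, hd, mul_zero, zero_mul]

private lemma inv_diag_zero {F : Type*} [Field F] [CharP F 2] {r : ℕ}
    (H : Matrix (Fin r) (Fin r) F) (hs : H.IsSymm) (hd : ∀ i, H i i = 0)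
    (hu : IsUnit H.det) (i : Fin r) : H⁻¹ i i = 0 := by
  have hinv_s : (H⁻¹).IsSymm := by
    rw [Matrix.IsSymm, Matrix.transpose_nonsing_inv, hs.eq]
  set w : Fin r → F := fun k => H⁻¹ i k with hw
  have hmv : H *ᵥ w = fun j => (1 : Matrix (Fin r) (Fin r) F) j i := by
    funext j
    simp only [Matrix.mulVec, dotProduct, hw]
    calc ∑ k, H j k * H⁻¹ i k = ∑ k, H j k * H⁻¹ k i :=
          Finset.sum_congr rfl fun k _ => by rw [hinv_s.apply i k]
      _ = (H * H⁻¹) j i := by rw [Matrix.mul_apply]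
      _ = (1 : Matrix (Fin r) (Fin r) F) j i := by rw [Matrix.mul_nonsing_inv _ hu]
  have hq : w ⬝ᵥ H *ᵥ w = H⁻¹ i i := by
    rw [hmv]
    simp [dotProduct, Matrix.one_apply, hw]
  rw [← hq]
  exact alt_quad H hs hd w

private lemma forward_diag {F : Type*} [Field F] [CharP F 2] {n r : ℕ}
    (x : Fin r → Fin n → F) (A B : Matrix (Fin n) (Fin n) F)
    (hAs : A.IsSymm) (hA : IsUnit A)
    (hB : B = A + ∑ i, vecMulVec (x i) (x i))
    (hBu : IsUnit B)
    (h : ∀ i, x i ⬝ᵥ A⁻¹ *ᵥ x i = 1) (i : Fin r) : x i ⬝ᵥ B⁻¹ *ᵥ x i = 1 := by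
  have hAd : IsUnit A.det := (Matrix.isUnit_iff_isUnit_det A).1 hA
  have hBd : IsUnit B.det := (Matrix.isUnit_iff_isUnit_det B).1 hBu
  have hA1 : A * A⁻¹ = 1 := Matrix.mul_nonsing_inv A hAd
  have hA2 : A⁻¹ * A = 1 := Matrix.nonsing_inv_mul A hAd
  have hAis : (A⁻¹)ᵀ = A⁻¹ := by rw [Matrix.transpose_nonsing_inv, hAs.eq]
  set Y : Matrix (Fin r) (Fin n) F := Matrix.of x with hY
  have hS : ∑ j, vecMulVec (x j) (x j) = Yᵀ * Y := by
    ext a b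
    simp [Matrix.mul_apply, vecMulVec, Matrix.sum_apply, hY, mul_comm]
  set G : Matrix (Fin r) (Fin r) F := Y * A⁻¹ * Yᵀ with hGdef
  have hquad : ∀ (M : Matrix (Fin n) (Fin n) F) (j : Fin r),
      x j ⬝ᵥ M *ᵥ x j = (Y * M * Yᵀ) j j := by
    intro M j
    simp only [Matrix.mul_apply, Matrix.transpose_apply, dotProduct, Matrix.mulVec,
      hY, Matrix.of_apply, Finset.sum_mul, Finset.mul_sum]
    rw [Finset.sum_comm]
    exact Finset.sum_congr rfl fun a _ => Finset.sum_congr rfl fun b _ => by ring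
  have hGd : ∀ j, G j j = 1 := by
    intro j
    rw [hGdef, ← hquad]
    exact h j
  have hGsym : G.IsSymm := by
    rw [Matrix.IsSymm, hGdef, Matrix.transpose_mul, Matrix.transpose_mul,
      Matrix.transpose_transpose, hAis, Matrix.mul_assoc]
  set H : Matrix (Fin r) (Fin r) F := 1 + G with hHdef
  have hHs : H.IsSymm := by
    rw [Matrix.IsSymm, hHdef, Matrix.transpose_add, Matrix.transpose_one, hGsym.eq]
  have hHd : ∀ j, H j j = 0 := by
    intro j
    rw [hHdef]
    simp only [Matrix.add_apply, Matrix.one_apply_eq, hGd j]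
    exact CharTwo.add_self_eq_zero 1
  have hGH : G = H + 1 := by
    rw [hHdef, add_comm (1 : Matrix (Fin r) (Fin r) F) G, add_assoc,
      add_self_mat, add_zero]
  -- invertibility of H
  have hBfact : B = A * (1 + A⁻¹ * Yᵀ * Y) := by
    rw [Matrix.mul_add, Matrix.mul_one, ← Matrix.mul_assoc, ← Matrix.mul_assoc, hA1,
      Matrix.one_mul, hB, hS]
  have hHu : IsUnit H.det := by
    have hdet : B.det = A.det * H.det := by
      rw [hBfact, Matrix.det_mul]
      congr 1
      rw [Matrix.det_one_add_mul_comm (A⁻¹ * Yᵀ) Y, ← Matrix.mul_assoc, ← hGdef, ← hHdef]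
    rw [hdet] at hBd
    exact isUnit_of_mul_isUnit_right hBd
  have hH1 : H * H⁻¹ = 1 := Matrix.mul_nonsing_inv _ hHu
  have hH2 : H⁻¹ * H = 1 := Matrix.nonsing_inv_mul _ hHu
  -- helper rewriting lemmas (right-associated)
  have hAAi : ∀ {k : ℕ} (M : Matrix (Fin n) (Fin k) F), A * (A⁻¹ * M) = M := by
    intro k M
    rw [← Matrix.mul_assoc, hA1, Matrix.one_mul]
  have hHHi : ∀ {k : ℕ} (M : Matrix (Fin r) (Fin k) F), H * (H⁻¹ * M) = M := by
    intro k M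
    rw [← Matrix.mul_assoc, hH1, Matrix.one_mul]
  have hYAY : ∀ {k : ℕ} (M : Matrix (Fin r) (Fin k) F),
      Y * (A⁻¹ * (Yᵀ * M)) = H * M + M := by
    intro k M
    rw [← Matrix.mul_assoc, ← Matrix.mul_assoc, ← hGdef, hGH, Matrix.add_mul,
      Matrix.one_mul]
  have hYAYt : Y * (A⁻¹ * Yᵀ) = H + 1 := by
    rw [← Matrix.mul_assoc, ← hGdef, hGH]
  -- right inverse of B
  set C : Matrix (Fin n) (Fin n) F := A⁻¹ + A⁻¹ * (Yᵀ * (H⁻¹ * (Y * A⁻¹))) with hC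
  have hBC : B * C = 1 := by
    rw [hB, hS, hC]
    simp only [Matrix.mul_add, Matrix.add_mul, Matrix.mul_assoc, hAAi, hYAY, hHHi,
      hA1, Matrix.one_mul, Matrix.mul_one]
    abel_nf
    simp [two_smul, two_nsmul, add_self_mat]
  have hBinv : B⁻¹ = C := Matrix.inv_eq_right_inv hBC
  -- final computation
  have hfin : Y * B⁻¹ * Yᵀ = 1 + H⁻¹ := by
    rw [hBinv, hC]
    simp only [Matrix.mul_add, Matrix.add_mul, Matrix.mul_assoc, hYAYt, hYAY, hHHi,
      hH1, hH2, Matrix.one_mul, Matrix.mul_one]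
    abel_nf
    simp only [two_smul, two_nsmul, add_self_mat, add_zero, zero_add]
    simp [succ_nsmul, add_self_mat]
    rw [show (3 : Matrix (Fin r) (Fin r) F) = 1 + (1 + 1) by norm_num,
      add_self_mat, add_zero]
  rw [hquad B⁻¹ i, hfin, Matrix.add_apply, Matrix.one_apply_eq,
    inv_diag_zero H hHs hHd hHu i, add_zero]

/-- Over a field of characteristic two, with `A` and `B = A + ∑ xᵢxᵢᵀ` invertible symmetric
matrices, `xᵢᵀ A⁻¹ xᵢ = 1` for all `i` iff `xᵢᵀ B⁻¹ xᵢ = 1` for all `i`. -/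
theorem diag_one_iff_diag_one {F : Type*} [Field F] [CharP F 2] {n r : ℕ}
    (x : Fin r → Fin n → F) (A B : Matrix (Fin n) (Fin n) F)
    (hAs : A.IsSymm) (hA : IsUnit A)
    (hB : B = A + ∑ i, vecMulVec (x i) (x i))
    (hBs : B.IsSymm) (hBu : IsUnit B) :
    (∀ i, x i ⬝ᵥ A⁻¹ *ᵥ x i = 1) ↔ (∀ i, x i ⬝ᵥ B⁻¹ *ᵥ x i = 1) := by
  have hA' : A = B + ∑ j, vecMulVec (x j) (x j) := by
    rw [hB, add_assoc, add_self_mat, add_zero]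
  constructor
  · exact fun h i => forward_diag x A B hAs hA hB hBu h i
  · exact fun h i => forward_diag x B A hBs hBu hA' hA h i
end

section
/- Let r be an odd integer with 1 ≤ r ≤ n, let x₁,…,x_r ∈ F₂ⁿ, and suppose A and A + Σᵢ₌₁^r xᵢxᵢᵀ are both invertible symmetric n×n matrices over F₂. Then there exists an index i such that xᵢᵀ A⁻¹ xᵢ = 0. -/
/-!
By the matrix determinant lemma, `det (A + ∑ xᵢxᵢᵀ) = det A · det (1 + G)` with
`G i j = xᵢᵀ A⁻¹ xⱼ`. If every `G i i` were `1`, then `1 + G` would be a symmetric `r × r`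
matrix over `𝔽₂` with zero diagonal; for odd `r` such a matrix is singular, contradicting the
invertibility of `A + ∑ xᵢxᵢᵀ`.
-/

open Matrix Equiv

theorem Equiv.Perm.exists_fixed_point_of_sq_eq_one {α : Type*} [Fintype α]
    (hα : Odd (Fintype.card α)) {σ : Perm α} (hσ : σ ^ 2 = 1) : ∃ a, σ a = a :=
  exists_fixed_point_of_prime (p := 2) (n := 1)
    (by rwa [← even_iff_two_dvd, Nat.not_even_iff_odd]) (by simpa using hσ)

namespace Matrix

variable {ι R : Type*} [Fintype ι] [CommRing R]

theorem prod_perm_inv_eq_of_isSymm {M : Matrix ι ι R} (hM : M.IsSymm) (σ : Perm ι) :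
    ∏ i, M (σ⁻¹ i) i = ∏ i, M (σ i) i := by
  rw [← Equiv.prod_comp σ (fun i => M (σ⁻¹ i) i)]
  simp [hM.apply]

variable [DecidableEq ι]

theorem det_eq_zero_of_isSymm_of_diag_eq_zero [CharP R 2] (hι : Odd (Fintype.card ι))
    {M : Matrix ι ι R} (hM : M.IsSymm) (hdiag : ∀ i, M i i = 0) : M.det = 0 := by
  rw [det_apply']
  -- pairing `σ` with `σ⁻¹` cancels all terms except those of involutions, which vanish
  refine Finset.sum_ninvolution (fun σ => σ⁻¹) (fun σ => ?_) (fun σ hσ => ?_)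
    (fun _ => Finset.mem_univ _) inv_inv
  · rw [Perm.sign_inv, prod_perm_inv_eq_of_isSymm hM, CharTwo.add_self_eq_zero]
  · intro hinv
    obtain ⟨i, hi⟩ :=
      Perm.exists_fixed_point_of_sq_eq_one hι (inv_eq_iff_mul_eq_one.mp hinv ▸ sq σ)
    exact hσ (by rw [Finset.prod_eq_zero (Finset.mem_univ i) (by rw [hi, hdiag])]; simp)

theorem det_add_sum_vecMulVec {m : Type*} [Fintype m] [DecidableEq m] {A : Matrix ι ι R}
    (hA : IsUnit A.det) (u v : m → ι → R) :
    (A + ∑ k, vecMulVec (u k) (v k)).det =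
      A.det * (1 + of fun k l => v k ⬝ᵥ A⁻¹ *ᵥ u l).det := by
  have hUV : ∑ k, vecMulVec (u k) (v k) = (of u)ᵀ * of v := by
    ext a b
    simp [mul_apply, vecMulVec_apply, sum_apply]
  have hG : of v * A⁻¹ * (of u)ᵀ = of fun k l => v k ⬝ᵥ A⁻¹ *ᵥ u l := by
    ext k l
    rw [mul_apply', mul_apply_eq_vecMul, ← dotProduct_mulVec]
    rfl
  rw [hUV, det_add_mul _ _ hA, hG]

end Matrix

theorem exists_diag_zero_general {n r : ℕ} (hodd : Odd r)
    (x : Fin r → Fin n → ZMod 2) (A : Matrix (Fin n) (Fin n) (ZMod 2))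
    (hAs : A.IsSymm) (hA : IsUnit A)
    (hBu : IsUnit (A + ∑ i, vecMulVec (x i) (x i))) :
    ∃ i, x i ⬝ᵥ A⁻¹ *ᵥ x i = 0 := by
  by_contra! hne
  set G : Matrix (Fin r) (Fin r) (ZMod 2) := of fun i j => x i ⬝ᵥ A⁻¹ *ᵥ x j
  have hunit : IsUnit (1 + G).det := by
    rw [isUnit_iff_isUnit_det, det_add_sum_vecMulVec ((isUnit_iff_isUnit_det A).mp hA)] at hBu
    exact isUnit_of_mul_isUnit_right hBu
  have hsymm : (1 + G).IsSymm := isSymm_one.add <| IsSymm.ext fun i j => by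
    simp only [G, of_apply]
    rw [← dotProduct_transpose_mulVec, hAs.inv.eq]
  have hdiag : ∀ i, (1 + G) i i = 0 := fun i => by
    simpa [G] using (by decide : ∀ a : ZMod 2, a ≠ 0 → 1 + a = 0) _ (hne i)
  exact hunit.ne_zero <| det_eq_zero_of_isSymm_of_diag_eq_zero (by simpa using hodd) hsymm hdiag

/-- If `r` is odd, `1 ≤ r ≤ n`, and both `A` and `A + ∑ xᵢxᵢᵀ` are invertible symmetric
matrices over `F₂`, then `xᵢᵀ A⁻¹ xᵢ = 0` for some `i`. -/
theorem exists_diag_zero {n r : ℕ} (hodd : Odd r) (hr1 : 1 ≤ r) (hrn : r ≤ n)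
    (x : Fin r → Fin n → ZMod 2) (A : Matrix (Fin n) (Fin n) (ZMod 2))
    (hAs : A.IsSymm) (hA : IsUnit A)
    (hBs : (A + ∑ i, vecMulVec (x i) (x i)).IsSymm)
    (hBu : IsUnit (A + ∑ i, vecMulVec (x i) (x i))) :
    ∃ i, x i ⬝ᵥ A⁻¹ *ᵥ x i = 0 :=
  exists_diag_zero_general hodd x A hAs hA hBu
end

section
/- Let A be a symmetric n×n matrix over F₂. Then A has rank one and trace zero if and only if there exist a permutation matrix Q ∈ GL_n(F₂) and an even integer k with 2 ≤ k ≤ n such that A = Q · diag(J_{k×k}, 0) · Qᵀ, where J_{k×k} is the k×k all-ones matrix. -/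
/-!
A vanishing `2 × 2` minor of a symmetric matrix gives `A i j ^ 2 = A i i * A j j`, and `x ^ 2 = x`
in `F₂`, so a symmetric `F₂`-matrix of rank one is `v vᵀ` with `v` its diagonal. The trace of
`v vᵀ` is the number `k` of ones in `v`, taken mod 2, and a permutation carrying the support of `v`
onto the first `k` coordinates conjugates `v vᵀ` into `diag(J_{k×k}, 0)`.
-/

open Matrix

namespace Matrix

section Rank

variable {m n K : Type*} [Fintype n] [Field K]

theorem one_le_rank_of_apply_ne_zero {A : Matrix m n K} {i : m} {j : n} (h : A i j ≠ 0) :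
    1 ≤ A.rank := by
  have hdet : (A.submatrix ![i] ![j]).det ≠ 0 := by rwa [det_fin_one]
  calc 1 = (A.submatrix ![i] ![j]).rank := by rw [rank_of_det_ne_zero hdet, Fintype.card_fin]
    _ ≤ A.rank := rank_submatrix_le A _ _

theorem mul_apply_eq_mul_apply_of_rank_le_one {A : Matrix m n K} (h : A.rank ≤ 1)
    (i i' : m) (j j' : n) : A i j * A i' j' = A i j' * A i' j := by
  have hdet : (A.submatrix ![i, i'] ![j, j']).det = 0 := by
    by_contra hdet
    have := (rank_of_det_ne_zero hdet).symm.trans_le ((rank_submatrix_le A _ _).trans h)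
    simp at this
  rw [det_fin_two] at hdet
  simpa [sub_eq_zero] using hdet

theorem rank_vecMulVec_eq_one {w : m → K} {v : n → K} (hw : w ≠ 0) (hv : v ≠ 0) :
    (vecMulVec w v).rank = 1 := by
  obtain ⟨i, hi⟩ := Function.ne_iff.mp hw
  obtain ⟨j, hj⟩ := Function.ne_iff.mp hv
  exact (rank_vecMulVec_le w v).antisymm
    (one_le_rank_of_apply_ne_zero (A := vecMulVec w v) (i := i) (j := j) (mul_ne_zero hi hj))

end Rank

theorem permMatrix_mul_mul_transpose_permMatrix {n R : Type*} [Fintype n] [DecidableEq n]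
    [NonAssocSemiring R] (σ : Equiv.Perm n) (M : Matrix n n R) :
    σ.permMatrix R * M * (σ.permMatrix R)ᵀ = M.submatrix σ σ := by
  rw [transpose_permMatrix, Equiv.Perm.permMatrix, Equiv.Perm.permMatrix,
    PEquiv.toMatrix_toPEquiv_mul, PEquiv.mul_toMatrix_toPEquiv]
  rfl

theorem trace_submatrix_equiv_self {m n R : Type*} [Fintype m] [Fintype n]
    [AddCommMonoid R] (e : m ≃ n) (A : Matrix n n R) : (A.submatrix e e).trace = A.trace :=
  e.sum_comp fun i => A i i

end Matrix

theorem Equiv.exists_perm_comp_eq_of_card_fiber_eq {α β : Type*} [Finite α] {f g : α → β}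
    (h : ∀ b, Nat.card {a // f a = b} = Nat.card {a // g a = b}) :
    ∃ σ : Equiv.Perm α, g ∘ σ = f :=
  ⟨Equiv.ofFiberEquiv fun b => (Finite.card_eq.mp (h b)).some, funext (Equiv.ofFiberEquiv_map _)⟩

namespace ZMod

variable {ι : Type*} [Fintype ι]

theorem mul_self_mod_two (x : ZMod 2) : x * x = x := by
  revert x; decide

theorem ne_zero_iff_eq_one_mod_two {x : ZMod 2} : x ≠ 0 ↔ x = 1 := by
  revert x; decide

theorem sum_mod_two_eq_card (v : ι → ZMod 2) : ∑ i, v i = Fintype.card {i // v i = 1} := by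
  have h01 : ∀ x : ZMod 2, (if x = 1 then 1 else 0) = x := by decide
  simp_rw [Fintype.card_subtype, ← Finset.sum_boole, h01]

theorem exists_perm_comp_eq_of_card_eq_one {v w : ι → ZMod 2}
    (h : Fintype.card {i // v i = 1} = Fintype.card {i // w i = 1}) :
    ∃ σ : Equiv.Perm ι, w ∘ σ = v := by
  refine Equiv.exists_perm_comp_eq_of_card_fiber_eq fun x => ?_
  have card_eq_zero : ∀ u : ι → ZMod 2,
      Fintype.card {i // u i = 0} = Fintype.card ι - Fintype.card {i // u i = 1} := fun u => by
    rw [← Fintype.card_subtype_compl]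
    exact Fintype.card_congr (Equiv.subtypeEquivRight fun i => by
      rw [← ne_zero_iff_eq_one_mod_two, not_not])
  simp only [Nat.card_eq_fintype_card]
  fin_cases x
  · exact (card_eq_zero v).trans (h ▸ (card_eq_zero w).symm)
  · exact h

end ZMod

namespace Matrix

variable {n : Type*} [Fintype n]

theorem eq_vecMulVec_diag_of_rank_le_one {A : Matrix n n (ZMod 2)} (hA : A.IsSymm)
    (h : A.rank ≤ 1) : A = vecMulVec A.diag A.diag := by
  ext i j
  have hminor := mul_apply_eq_mul_apply_of_rank_le_one h i j j i
  rwa [hA.apply i j, ZMod.mul_self_mod_two] at hminor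

theorem trace_vecMulVec_self_mod_two (v : n → ZMod 2) :
    (vecMulVec v v).trace = Fintype.card {i // v i = 1} := by
  simp only [trace_vecMulVec, dotProduct, ZMod.mul_self_mod_two, ZMod.sum_mod_two_eq_card]

end Matrix

def leadingOnes (R : Type*) [Zero R] [One R] (n k : ℕ) : Fin n → R :=
  fun i => if (i : ℕ) < k then 1 else 0

section LeadingOnes

variable {R : Type*}

theorem of_lt_and_lt_eq_vecMulVec_leadingOnes [MulZeroOneClass R] (n k : ℕ) :
    Matrix.of (fun i j : Fin n => if (i : ℕ) < k ∧ (j : ℕ) < k then (1 : R) else 0) =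
      vecMulVec (leadingOnes R n k) (leadingOnes R n k) := by
  ext i j
  simp only [leadingOnes, of_apply, vecMulVec_apply, ite_and, ite_mul, one_mul, zero_mul]

variable [Zero R] [One R] [NeZero (1 : R)] {n k : ℕ}

theorem leadingOnes_ne_zero (hk : 0 < k) (hkn : k ≤ n) : leadingOnes R n k ≠ 0 :=
  Function.ne_iff.mpr ⟨⟨0, hk.trans_le hkn⟩, by simp [leadingOnes, hk]⟩

theorem card_leadingOnes_eq_one [DecidableEq R] (hkn : k ≤ n) :
    Fintype.card {i // leadingOnes R n k i = 1} = k := by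
  simp [leadingOnes, Fintype.card_subtype, Fin.card_filter_val_lt, hkn]

end LeadingOnes

/-- A symmetric matrix over `F₂` has rank one and trace zero iff it equals
`Q * diag(J_{k×k}, 0) * Qᵀ` for a permutation matrix `Q` and an even `k` with `2 ≤ k ≤ n`. -/
theorem rank_one_trace_zero_iff {n : ℕ} (A : Matrix (Fin n) (Fin n) (ZMod 2))
    (hAs : A.IsSymm) :
    (A.rank = 1 ∧ A.trace = 0) ↔
      ∃ (σ : Equiv.Perm (Fin n)) (k : ℕ), Even k ∧ 2 ≤ k ∧ k ≤ n ∧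
        A = σ.permMatrix (ZMod 2) *
            Matrix.of (fun i j : Fin n => if (i : ℕ) < k ∧ (j : ℕ) < k then (1 : ZMod 2) else 0) *
            (σ.permMatrix (ZMod 2))ᵀ := by
  simp only [of_lt_and_lt_eq_vecMulVec_leadingOnes, permMatrix_mul_mul_transpose_permMatrix]
  constructor
  · rintro ⟨hrank, htrace⟩
    set d := A.diag
    have hA : A = vecMulVec d d := eq_vecMulVec_diag_of_rank_le_one hAs hrank.le
    have hd : d ≠ 0 := by
      intro hd
      rw [hA, hd, zero_vecMulVec, rank_zero] at hrank
      exact zero_ne_one hrank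
    set k := Fintype.card {i // d i = 1}
    have hk_even : Even k := by
      rwa [hA, trace_vecMulVec_self_mod_two, ZMod.natCast_eq_zero_iff_even] at htrace
    have hk_pos : 0 < k := by
      obtain ⟨i, hi⟩ := Function.ne_iff.mp hd
      exact Fintype.card_pos_iff.mpr ⟨⟨i, ZMod.ne_zero_iff_eq_one_mod_two.mp hi⟩⟩
    have hkn : k ≤ n := (Fintype.card_subtype_le _).trans_eq (Fintype.card_fin n)
    obtain ⟨σ, hσ⟩ := ZMod.exists_perm_comp_eq_of_card_eq_one (card_leadingOnes_eq_one hkn).symm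
    refine ⟨σ, k, hk_even, ?_, hkn, ?_⟩
    · obtain ⟨r, hr⟩ := hk_even
      omega
    · rw [hA, ← hσ]
      rfl
  · rintro ⟨σ, k, hk_even, hk2, hkn, rfl⟩
    have hv : leadingOnes (ZMod 2) n k ≠ 0 := leadingOnes_ne_zero (by omega) hkn
    refine ⟨?_, ?_⟩
    · rw [rank_submatrix, rank_vecMulVec_eq_one hv hv]
    · rw [trace_submatrix_equiv_self, trace_vecMulVec_self_mod_two, card_leadingOnes_eq_one hkn]
      exact hk_even.natCast_zmod_two
end

section
/- Let A be a nonzero alternate symmetric n×n matrix over F₂ of rank r. Then there exist linearly independent vectors x₁,…,x_r ∈ F₂ⁿ such that A = x₁x₁ᵀ + ⋯ + x_r x_rᵀ + (x₁+⋯+x_r)(x₁+⋯+x_r)ᵀ. -/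
/-!
Pick `p`, `q` with `A p q ≠ 0` and put `u = A p`, `v = (A p q)⁻¹ • A q`, both in the column
space of `A`. In characteristic 2 the matrix `A' = A + u vᵀ + v uᵀ` is again alternate, its rows
`p` and `q` vanish, and its column space is strictly smaller than that of `A`. By induction
`A' = ∑ xᵢ xᵢᵀ + s sᵀ` with `s = ∑ xᵢ` and independent `xᵢ` in the column space of `A'`, so the
`xᵢ` vanish at `p` and `q`. Appending `a = u + s` and `b = v + s` keeps the family independent
(read off coordinates `q` and `p`), and in characteristic 2
`a aᵀ + b bᵀ + (a + b + s)(a + b + s)ᵀ = s sᵀ + u vᵀ + v uᵀ`, so the longer family represents `A`.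
Since the family spans the column space of `A`, its length is `rank A`.
-/

open Matrix

namespace Matrix

variable {R K V ι : Type*}

structure IsAlternate [Zero R] (A : Matrix ι ι R) : Prop where
  isSymm : A.IsSymm
  apply_self : ∀ i, A i i = 0

def canonicalForm [AddCommMonoid R] [Mul R] {r : ℕ} (x : Fin r → ι → R) : Matrix ι ι R :=
  ∑ i, vecMulVec (x i) (x i) + vecMulVec (∑ i, x i) (∑ i, x i)

section CommRing

variable [CommRing R]

theorem IsAlternate.add_vecMulVec_add_vecMulVec [CharP R 2] {A : Matrix ι ι R}
    (hA : A.IsAlternate) (u v : ι → R) : (A + vecMulVec u v + vecMulVec v u).IsAlternate where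
  isSymm := by
    simp only [IsSymm, transpose_add, transpose_vecMulVec, hA.isSymm.eq]
    abel
  apply_self i := by
    simp only [add_apply, vecMulVec_apply, hA.apply_self, zero_add, mul_comm (v i),
      CharTwo.add_self_eq_zero]

theorem range_mulVecLin_add_vecMulVec_add_vecMulVec_le [Fintype ι] {A : Matrix ι ι R}
    {u v : ι → R} (hu : u ∈ LinearMap.range A.mulVecLin) (hv : v ∈ LinearMap.range A.mulVecLin) :
    LinearMap.range (A + vecMulVec u v + vecMulVec v u).mulVecLin ≤
      LinearMap.range A.mulVecLin := by
  rintro _ ⟨y, rfl⟩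
  simp only [mulVecLin_apply, add_mulVec, vecMulVec_mulVec, op_smul_eq_smul]
  exact add_mem (add_mem ⟨y, rfl⟩ (Submodule.smul_mem _ _ hu)) (Submodule.smul_mem _ _ hv)

theorem range_mulVecLin_canonicalForm_le [Fintype ι] {r : ℕ} (x : Fin r → ι → R) :
    LinearMap.range (canonicalForm x).mulVecLin ≤ Submodule.span R (Set.range x) := by
  have hsum : ∑ i, x i ∈ Submodule.span R (Set.range x) :=
    Submodule.sum_mem _ fun i _ => Submodule.subset_span ⟨i, rfl⟩
  rintro _ ⟨y, rfl⟩
  simp only [canonicalForm, mulVecLin_apply, add_mulVec, sum_mulVec, vecMulVec_mulVec,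
    op_smul_eq_smul]
  exact add_mem (Submodule.sum_mem _ fun i _ =>
    Submodule.smul_mem _ _ (Submodule.subset_span ⟨i, rfl⟩)) (Submodule.smul_mem _ _ hsum)

theorem vecMulVec_add_vecMulVec_add_vecMulVec_of_charTwo [CharP R 2] (u v s : ι → R) :
    vecMulVec (u + s) (u + s) + vecMulVec (v + s) (v + s) +
        vecMulVec (u + v + s) (u + v + s) =
      vecMulVec s s + vecMulVec u v + vecMulVec v u := by
  ext i j
  simp only [add_apply, vecMulVec_apply, Pi.add_apply]
  linear_combination (u i * u j + v i * v j + s i * s j + u i * s j + s i * u j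
    + v i * s j + s i * v j) * CharTwo.two_eq_zero (R := R)

theorem canonicalForm_snoc_snoc [CharP R 2] {r : ℕ} (x : Fin r → ι → R) (u v : ι → R) :
    canonicalForm (Fin.snoc (Fin.snoc x (u + ∑ i, x i)) (v + ∑ i, x i) : Fin (r + 2) → ι → R) =
      canonicalForm x + vecMulVec u v + vecMulVec v u := by
  simp only [canonicalForm, Fin.sum_univ_castSucc, Fin.snoc_castSucc, Fin.snoc_last]
  generalize ∑ i, x i = s
  have hsum : s + (u + s) + (v + s) = u + v + s := by
    ext k
    simp only [Pi.add_apply]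
    linear_combination s k * CharTwo.two_eq_zero (R := R)
  rw [hsum, add_assoc, add_assoc, ← add_assoc (vecMulVec (u + s) _),
    vecMulVec_add_vecMulVec_add_vecMulVec_of_charTwo]
  abel

theorem range_mulVecLin_le_ker_proj {m n : Type*} [Fintype n] {M : Matrix m n R} {p : m}
    (hp : M p = 0) :
    LinearMap.range M.mulVecLin ≤ LinearMap.ker (LinearMap.proj p) := by
  rintro _ ⟨y, rfl⟩
  simp [mulVec, hp]

theorem IsSymm.row_mem_range_mulVecLin [Fintype ι] [DecidableEq ι] {A : Matrix ι ι R}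
    (hA : A.IsSymm) (p : ι) : A p ∈ LinearMap.range A.mulVecLin :=
  ⟨Pi.single p 1, by ext i; simp [hA.apply p i]⟩

end CommRing

theorem _root_.LinearIndependent.finSnoc_finSnoc [DivisionRing K] [AddCommGroup V] [Module K V]
    {r : ℕ} {x : Fin r → V} {a b : V} (f g : V →ₗ[K] K) (hx : LinearIndependent K x)
    (hfx : ∀ i, f (x i) = 0) (hgx : ∀ i, g (x i) = 0) (hfa : f a = 0) (hga : g a ≠ 0)
    (hfb : f b ≠ 0) : LinearIndependent K (Fin.snoc (Fin.snoc x a) b : Fin (r + 2) → V) := by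
  rw [linearIndependent_finSnoc, linearIndependent_finSnoc]
  refine ⟨⟨hx, fun ha => hga ?_⟩, fun hb => hfb ?_⟩
  · have : Submodule.span K (Set.range x) ≤ LinearMap.ker g := by
      rw [Submodule.span_le]
      rintro _ ⟨i, rfl⟩
      exact hgx i
    exact this ha
  · have : Submodule.span K (Set.range (Fin.snoc x a : Fin (r + 1) → V)) ≤ LinearMap.ker f := by
      rw [Submodule.span_le, Fin.range_snoc, Set.insert_subset_iff]
      refine ⟨hfa, ?_⟩
      rintro _ ⟨i, rfl⟩
      exact hfx i
    exact this hb

section Pivot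

variable [Field K] {A : Matrix ι ι K} {p q : ι}

def pivotReduce (A : Matrix ι ι K) (p q : ι) : Matrix ι ι K :=
  A + vecMulVec (A p) ((A p q)⁻¹ • A q) + vecMulVec ((A p q)⁻¹ • A q) (A p)

theorem IsSymm.range_pivotReduce_le [Fintype ι] [DecidableEq ι] (hA : A.IsSymm) (p q : ι) :
    LinearMap.range (A.pivotReduce p q).mulVecLin ≤ LinearMap.range A.mulVecLin :=
  range_mulVecLin_add_vecMulVec_add_vecMulVec_le (hA.row_mem_range_mulVecLin p)
    (Submodule.smul_mem _ _ (hA.row_mem_range_mulVecLin q))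

variable [CharP K 2]

theorem pivotReduce_add_vecMulVec_add_vecMulVec (A : Matrix ι ι K) (p q : ι) :
    A.pivotReduce p q + vecMulVec (A p) ((A p q)⁻¹ • A q) +
      vecMulVec ((A p q)⁻¹ • A q) (A p) = A := by
  ext i j
  simp only [pivotReduce, add_apply, vecMulVec_apply]
  linear_combination (A p i * ((A p q)⁻¹ • A q) j + ((A p q)⁻¹ • A q) i * A p j) *
    CharTwo.two_eq_zero (R := K)

theorem IsAlternate.pivotReduce_apply_left (hA : A.IsAlternate) (hpq : A p q ≠ 0) :
    A.pivotReduce p q p = 0 := by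
  ext j
  have hqp : A q p = A p q := hA.isSymm.apply p q
  simp only [pivotReduce, add_apply, vecMulVec_apply, Pi.smul_apply, smul_eq_mul,
    hA.apply_self, hqp, inv_mul_cancel₀ hpq, zero_mul, add_zero, one_mul, Pi.zero_apply,
    CharTwo.add_self_eq_zero]

theorem IsAlternate.pivotReduce_apply_right (hA : A.IsAlternate) (hpq : A p q ≠ 0) :
    A.pivotReduce p q q = 0 := by
  ext j
  simp only [pivotReduce, add_apply, vecMulVec_apply, Pi.smul_apply, smul_eq_mul,
    hA.apply_self, ← mul_assoc, mul_inv_cancel₀ hpq, mul_zero, zero_mul, one_mul,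
    Pi.zero_apply, CharTwo.add_self_eq_zero]

theorem IsAlternate.pivotReduce (hA : A.IsAlternate) (p q : ι) :
    (A.pivotReduce p q).IsAlternate :=
  hA.add_vecMulVec_add_vecMulVec _ _

variable [Fintype ι] [DecidableEq ι]

theorem IsAlternate.rank_pivotReduce_lt (hA : A.IsAlternate) (hpq : A p q ≠ 0) :
    (A.pivotReduce p q).rank < A.rank := by
  refine Submodule.finrank_lt_finrank_of_lt (SetLike.lt_iff_le_and_exists.2
    ⟨hA.isSymm.range_pivotReduce_le p q, A p, hA.isSymm.row_mem_range_mulVecLin p,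
      fun h => hpq ?_⟩)
  exact range_mulVecLin_le_ker_proj (hA.pivotReduce_apply_right hpq) h

end Pivot

variable [Field K] [Fintype ι]

theorem _root_.LinearIndependent.rank_canonicalForm {r : ℕ} {x : Fin r → ι → K}
    (hx : LinearIndependent K x)
    (hspan : Submodule.span K (Set.range x) ≤ LinearMap.range (canonicalForm x).mulVecLin) :
    (canonicalForm x).rank = r := by
  rw [rank, le_antisymm (range_mulVecLin_canonicalForm_le x) hspan, finrank_span_eq_card hx,
    Fintype.card_fin]

variable [CharP K 2] [DecidableEq ι] {A : Matrix ι ι K}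

theorem IsAlternate.exists_linearIndependent_span_le_range_canonicalForm_eq
    (hA : A.IsAlternate) :
    ∃ (r : ℕ) (x : Fin r → ι → K), LinearIndependent K x ∧
      Submodule.span K (Set.range x) ≤ LinearMap.range A.mulVecLin ∧ A = canonicalForm x := by
  induction hk : A.rank using Nat.strong_induction_on generalizing A with
  | _ k ih =>
  obtain rfl | ⟨p, q, hpq⟩ : A = 0 ∨ ∃ p q, A p q ≠ 0 := by
    by_contra! h
    exact h.1 (ext h.2)
  · exact ⟨0, ![], linearIndependent_empty_type, by simp, by simp [canonicalForm]⟩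
  obtain ⟨r, x, hx, hspan, hA'⟩ :=
    ih _ (hk ▸ hA.rank_pivotReduce_lt hpq) (hA.pivotReduce p q) rfl
  have hp := range_mulVecLin_le_ker_proj (hA.pivotReduce_apply_left hpq)
  have hq := range_mulVecLin_le_ker_proj (hA.pivotReduce_apply_right hpq)
  have hxi (i) : x i ∈ LinearMap.range (A.pivotReduce p q).mulVecLin :=
    hspan (Submodule.subset_span ⟨i, rfl⟩)
  have hs : ∑ i, x i ∈ LinearMap.range (A.pivotReduce p q).mulVecLin :=
    Submodule.sum_mem _ fun i _ => hxi i
  refine ⟨r + 2, Fin.snoc (Fin.snoc x (A p + ∑ i, x i)) ((A p q)⁻¹ • A q + ∑ i, x i), ?_, ?_, ?_⟩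
  · refine hx.finSnoc_finSnoc (LinearMap.proj p) (LinearMap.proj q) (fun i => hp (hxi i))
      (fun i => hq (hxi i)) ?_ ?_ ?_ <;>
    simp [hA.apply_self, hA.isSymm.apply p q, hpq, show (∑ i, x i) p = 0 from hp hs,
      show (∑ i, x i) q = 0 from hq hs]
  · have hle := hA.isSymm.range_pivotReduce_le p q
    have hu := hA.isSymm.row_mem_range_mulVecLin p
    have hv := Submodule.smul_mem _ (A p q)⁻¹ (hA.isSymm.row_mem_range_mulVecLin q)
    rw [Submodule.span_le, Fin.range_snoc, Fin.range_snoc, Set.insert_subset_iff,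
      Set.insert_subset_iff, Set.range_subset_iff]
    exact ⟨add_mem hv (hle hs), add_mem hu (hle hs), fun i => hle (hxi i)⟩
  · rw [canonicalForm_snoc_snoc, ← hA', pivotReduce_add_vecMulVec_add_vecMulVec]

theorem IsAlternate.exists_linearIndependent_canonicalForm_eq (hA : A.IsAlternate) :
    ∃ x : Fin A.rank → ι → K, LinearIndependent K x ∧ A = canonicalForm x := by
  obtain ⟨r, x, hx, hspan, rfl⟩ := hA.exists_linearIndependent_span_le_range_canonicalForm_eq
  rw [hx.rank_canonicalForm hspan]
  exact ⟨x, hx, rfl⟩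

end Matrix

theorem alternate_canonical_general {n r : ℕ} (A : Matrix (Fin n) (Fin n) (ZMod 2))
    (hAs : A.IsSymm) (halt : ∀ i, A i i = 0) (hr : A.rank = r) :
    ∃ x : Fin r → Fin n → ZMod 2, LinearIndependent (ZMod 2) x ∧
      A = (∑ i, vecMulVec (x i) (x i)) + vecMulVec (∑ i, x i) (∑ i, x i) :=
  hr ▸ (IsAlternate.mk hAs halt).exists_linearIndependent_canonicalForm_eq

/-- A nonzero alternate symmetric matrix over `F₂` of rank `r` can be written as
`x₁x₁ᵀ + ⋯ + x_r x_rᵀ + (x₁+⋯+x_r)(x₁+⋯+x_r)ᵀ` with the `xᵢ` linearly independent. -/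
theorem alternate_canonical {n r : ℕ} (A : Matrix (Fin n) (Fin n) (ZMod 2))
    (hAs : A.IsSymm) (halt : ∀ i, A i i = 0) (hA0 : A ≠ 0) (hr : A.rank = r) :
    ∃ x : Fin r → Fin n → ZMod 2, LinearIndependent (ZMod 2) x ∧
      A = (∑ i, vecMulVec (x i) (x i)) + vecMulVec (∑ i, x i) (∑ i, x i) :=
  alternate_canonical_general A hAs halt hr
end

section
/- Let x₁,…,x_r ∈ F₂ⁿ be linearly independent. If Σᵢ₌₁^r xᵢxᵢᵀ = Σᵢ₌₁^r yᵢyᵢᵀ for some y₁,…,y_r ∈ F₂ⁿ, then the linear span of x₁,…,x_r equals the linear span of y₁,…,y_r. -/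
/-!
For `M = ∑ xᵢ xᵢᵀ` we have `M v = ∑ (xᵢ ⬝ᵥ v) xᵢ`, so the image of `M` lies in the span of the
`xᵢ`. If the `xᵢ` are linearly independent, a vector `v` dual to `x_k` (with `xᵢ ⬝ᵥ v = δᵢₖ`)
gives `M v = x_k`, so the image of `M` is exactly that span. Hence `span x = im M ≤ span y`, and
equality follows because `span x` has dimension `r` while `span y` is spanned by `r` vectors.
-/

open Matrix

variable {R K ι m : Type*} [Fintype m]

theorem Matrix.sum_vecMulVec_self_mulVec [CommSemiring R] [Fintype ι] (x : ι → m → R)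
    (v : m → R) : (∑ i, vecMulVec (x i) (x i)) *ᵥ v = ∑ i, (x i ⬝ᵥ v) • x i := by
  simp only [sum_mulVec, vecMulVec_mulVec, op_smul_eq_smul]

theorem Matrix.range_mulVecLin_sum_vecMulVec_self_le_span [CommSemiring R] [Fintype ι]
    (x : ι → m → R) :
    LinearMap.range (∑ i, vecMulVec (x i) (x i)).mulVecLin ≤ Submodule.span R (Set.range x) := by
  rintro _ ⟨v, rfl⟩
  rw [mulVecLin_apply, sum_vecMulVec_self_mulVec]
  exact Submodule.sum_mem _ fun i _ => Submodule.smul_mem _ _ (Submodule.subset_span ⟨i, rfl⟩)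

theorem LinearIndependent.exists_dotProduct_eq_single [Field K] [DecidableEq ι] {x : ι → m → K}
    (hx : LinearIndependent K x) (k : ι) :
    ∃ v : m → K, ∀ i, x i ⬝ᵥ v = (Pi.single k 1 : ι → K) i := by
  classical
  let b := Module.Basis.span hx
  obtain ⟨f, hf⟩ := LinearMap.exists_extend (b.coord k)
  refine ⟨(dotProductEquiv K m).symm f, fun i => ?_⟩
  have hfx : f (x i) = b.coord k (b i) := by
    rw [← hf, LinearMap.comp_apply, Module.Basis.span_apply]
    rfl
  rw [dotProduct_comm, ← dotProductEquiv_apply_apply, LinearEquiv.apply_symm_apply, hfx,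
    Module.Basis.coord_apply, Module.Basis.repr_self]
  simp [Finsupp.single_apply, Pi.single_apply, eq_comm]

theorem LinearIndependent.range_mulVecLin_sum_vecMulVec_self [Field K] [Fintype ι]
    {x : ι → m → K} (hx : LinearIndependent K x) :
    LinearMap.range (∑ i, vecMulVec (x i) (x i)).mulVecLin = Submodule.span K (Set.range x) := by
  classical
  refine (range_mulVecLin_sum_vecMulVec_self_le_span x).antisymm (Submodule.span_le.2 ?_)
  rintro _ ⟨k, rfl⟩
  obtain ⟨v, hv⟩ := hx.exists_dotProduct_eq_single k
  refine ⟨v, ?_⟩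
  rw [mulVecLin_apply, sum_vecMulVec_self_mulVec]
  simp [hv]

/-- If `x₁,…,x_r` are linearly independent and `∑ xᵢxᵢᵀ = ∑ yᵢyᵢᵀ`, then the spans coincide. -/
theorem span_eq_of_sum_outer_eq {n r : ℕ} (x y : Fin r → Fin n → ZMod 2)
    (hli : LinearIndependent (ZMod 2) x)
    (h : (∑ i, vecMulVec (x i) (x i)) = ∑ i, vecMulVec (y i) (y i)) :
    Submodule.span (ZMod 2) (Set.range x) = Submodule.span (ZMod 2) (Set.range y) := by
  have hle : Submodule.span (ZMod 2) (Set.range x) ≤ Submodule.span (ZMod 2) (Set.range y) := by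
    rw [← hli.range_mulVecLin_sum_vecMulVec_self, h]
    exact range_mulVecLin_sum_vecMulVec_self_le_span y
  refine Submodule.eq_of_le_of_finrank_le hle ?_
  rw [finrank_span_eq_card hli]
  exact finrank_range_le_card y
end

section
/- Let x₁,…,x_r ∈ F₂ⁿ and suppose the r×r Gram matrix [xᵢᵀxⱼ] has rank at most one. For each x ∈ F₂ⁿ define x̄ ∈ F₂^{n+1} by appending the entry xᵀx to x. Then the subspace of F₂^{n+1} spanned by x̄₁,…,x̄_r is a self-orthogonal code, i.e., ȳᵀz̄ = 0 for all ȳ, z̄ in the span. -/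
open Matrix

lemma gram_key {n r : ℕ} (x : Fin r → Fin n → ZMod 2)
    (h : (Matrix.of fun i j : Fin r => x i ⬝ᵥ x j).rank ≤ 1) :
    ∀ i j, x i ⬝ᵥ x j = (x i ⬝ᵥ x i) * (x j ⬝ᵥ x j) := by
  set G : Matrix (Fin r) (Fin r) (ZMod 2) := Matrix.of fun i j => x i ⬝ᵥ x j with hG
  have hprin : (LinearMap.range G.mulVecLin).IsPrincipal := by
    rw [← Submodule.finrank_le_one_iff_isPrincipal]
    exact h
  obtain ⟨v₀, hv₀⟩ := hprin
  -- each column of G is a multiple of v₀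
  have hcol : ∀ j, ∃ c : ZMod 2, ∀ i, G i j = c * v₀ i := by
    intro j
    have hmem : (G *ᵥ Pi.single j 1) ∈ LinearMap.range G.mulVecLin :=
      ⟨Pi.single j 1, rfl⟩
    rw [hv₀, Submodule.mem_span_singleton] at hmem
    obtain ⟨c, hc⟩ := hmem
    refine ⟨c, fun i => ?_⟩
    have := congrFun hc i
    simpa [Matrix.mulVec_single] using this.symm
  have hsymm : ∀ i j, G i j = G j i := by
    intro i j
    simp only [hG, Matrix.of_apply]
    exact dotProduct_comm _ _
  have hsq : ∀ a : ZMod 2, a * a = a := by decide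
  intro i j
  obtain ⟨ci, hci⟩ := hcol i
  obtain ⟨cj, hcj⟩ := hcol j
  have e1 : x i ⬝ᵥ x j = G i j := rfl
  have e2 : x i ⬝ᵥ x i = G i i := rfl
  have e3 : x j ⬝ᵥ x j = G j j := rfl
  rw [e1, e2, e3, hci i, hcj j]
  have : (ci * v₀ i) * (cj * v₀ j) = (cj * v₀ i) * (ci * v₀ j) := by ring
  rw [this, ← hcj i, ← hci j, ← hsymm i j, hsq]

/-- If the Gram matrix `[xᵢᵀxⱼ]` has rank at most one, then the span of the extended vectors
`x̄ᵢ = (xᵢ; xᵢᵀxᵢ) ∈ F₂^{n+1}` is a self-orthogonal code. -/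
theorem span_extended_self_orthogonal {n r : ℕ} (x : Fin r → Fin n → ZMod 2)
    (h : (Matrix.of fun i j : Fin r => x i ⬝ᵥ x j).rank ≤ 1) :
    ∀ y ∈ Submodule.span (ZMod 2)
        (Set.range fun i => (Fin.snoc (x i) (x i ⬝ᵥ x i) : Fin (n + 1) → ZMod 2)),
      ∀ z ∈ Submodule.span (ZMod 2)
        (Set.range fun i => (Fin.snoc (x i) (x i ⬝ᵥ x i) : Fin (n + 1) → ZMod 2)),
        y ⬝ᵥ z = 0 := by
  have key : ∀ i j, (Fin.snoc (x i) (x i ⬝ᵥ x i) : Fin (n + 1) → ZMod 2) ⬝ᵥ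
      (Fin.snoc (x j) (x j ⬝ᵥ x j) : Fin (n + 1) → ZMod 2) = 0 := by
    intro i j
    have : (Fin.snoc (x i) (x i ⬝ᵥ x i) : Fin (n + 1) → ZMod 2) ⬝ᵥ
        (Fin.snoc (x j) (x j ⬝ᵥ x j) : Fin (n + 1) → ZMod 2)
        = x i ⬝ᵥ x j + (x i ⬝ᵥ x i) * (x j ⬝ᵥ x j) := by
      simp [dotProduct, Fin.sum_univ_castSucc]
    rw [this, gram_key x h i j]
    have : ∀ a : ZMod 2, a + a = 0 := by decide
    exact this _
  intro y hy z hz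
  induction hy using Submodule.span_induction with
  | mem y hy =>
      obtain ⟨i, rfl⟩ := hy
      induction hz using Submodule.span_induction with
      | mem z hz => obtain ⟨j, rfl⟩ := hz; exact key i j
      | zero => simp
      | add a b _ _ ha hb => rw [dotProduct_add, ha, hb, add_zero]
      | smul c a _ ha => rw [dotProduct_smul, ha, smul_zero]
  | zero => simp
  | add a b _ _ ha hb => rw [add_dotProduct, ha, hb, add_zero]
  | smul c a _ ha => rw [smul_dotProduct, ha, smul_zero]
end

section
/- Let x₁,…,x_r ∈ F₂ⁿ be linearly independent vectors such that the Gram matrix [xᵢᵀxⱼ]_{i,j=1}^r has rank at most one. Then r ≤ ⌊(n+1)/2⌋. -/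
open Matrix

/-!
Vanishing of the 2×2 minors of the Gram matrix `G` gives `G i j ^ 2 = G i i * G j j`, and
`a ^ 2 = a` in `𝔽₂`, so `G i j = G i i * G j j`. Hence the extended vectors
`x̄ i = (x i, x i ⬝ᵥ x i) ∈ 𝔽₂ⁿ⁺¹` are pairwise orthogonal, and they are still independent. Their span
lies in the kernel of the rank-`r` map `u ↦ (x̄ i ⬝ᵥ u)ᵢ`, so rank–nullity gives `2 r ≤ n + 1`.
-/

theorem Matrix.mul_eq_mul_of_rank_le_one {K m n : Type*} [Field K] [Fintype n]
    {A : Matrix m n K} (hA : A.rank ≤ 1) (i k : m) (j l : n) :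
    A i j * A k l = A i l * A k j := by
  have := FiniteDimensional.span_of_finite K (Set.finite_range A.col)
  rw [rank_eq_finrank_span_cols, Submodule.finrank_le_one_iff_isPrincipal] at hA
  obtain ⟨v, hv⟩ := hA
  have hcol : ∀ j, ∃ c : K, c • v = A.col j := fun j ↦
    Submodule.mem_span_singleton.mp (hv ▸ Submodule.subset_span ⟨j, rfl⟩)
  choose c hc using hcol
  have hA : ∀ i j, A i j = c j * v i := fun i j ↦ by
    simpa using (congrFun (hc j) i).symm
  simp only [hA]
  ring

theorem dotProduct_snoc_snoc {R : Type*} [CommSemiring R] {n : ℕ} (u w : Fin n → R) (a b : R) :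
    Fin.snoc (α := fun _ ↦ R) u a ⬝ᵥ Fin.snoc (α := fun _ ↦ R) w b = u ⬝ᵥ w + a * b := by
  simp [dotProduct, Fin.sum_univ_castSucc]

theorem LinearIndependent.snoc {R : Type*} [Ring R] {ι : Type*} {n : ℕ} {x : ι → Fin n → R}
    (hx : LinearIndependent R x) (f : ι → R) :
    LinearIndependent R fun i ↦ Fin.snoc (α := fun _ ↦ R) (x i) (f i) := by
  refine LinearIndependent.of_comp (LinearMap.funLeft R R Fin.castSucc) ?_
  convert hx using 1
  ext i k
  simp [LinearMap.funLeft]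

theorem two_mul_card_le_of_dotProduct_eq_zero {K ι m : Type*} [Field K] [Fintype ι]
    [Fintype m] {v : ι → m → K} (hv : LinearIndependent K v)
    (horth : ∀ i j, v i ⬝ᵥ v j = 0) : 2 * Fintype.card ι ≤ Fintype.card m := by
  set A : Matrix ι m K := Matrix.of v
  have hrank : A.rank = Fintype.card ι := by
    rw [rank_eq_finrank_span_row]
    exact finrank_span_eq_card hv
  have hker : Submodule.span K (Set.range v) ≤ LinearMap.ker A.mulVecLin := by
    rw [Submodule.span_le]
    rintro _ ⟨j, rfl⟩
    ext i
    exact horth i j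
  have hspan := Submodule.finrank_mono hker
  rw [finrank_span_eq_card hv] at hspan
  have hsum := A.mulVecLin.finrank_range_add_finrank_ker
  rw [← Matrix.rank, hrank, Module.finrank_fintype_fun_eq_card] at hsum
  omega

/-- If `x₁,…,x_r ∈ F₂ⁿ` are linearly independent and the Gram matrix `[xᵢᵀxⱼ]` has rank at
most one, then `r ≤ ⌊(n+1)/2⌋`. -/
theorem card_le_of_gram_rank_le_one {n r : ℕ} (x : Fin r → Fin n → ZMod 2)
    (hli : LinearIndependent (ZMod 2) x)
    (h : (Matrix.of fun i j : Fin r => x i ⬝ᵥ x j).rank ≤ 1) :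
    r ≤ (n + 1) / 2 := by
  have hgram : ∀ i j, x i ⬝ᵥ x j = (x i ⬝ᵥ x i) * (x j ⬝ᵥ x j) := fun i j ↦ by
    have hminor := Matrix.mul_eq_mul_of_rank_le_one h i j j i
    simp only [Matrix.of_apply, dotProduct_comm (x j) (x i)] at hminor
    rw [← hminor, ← sq, ZMod.pow_card]
  have horth : ∀ i j, Fin.snoc (α := fun _ ↦ ZMod 2) (x i) (x i ⬝ᵥ x i) ⬝ᵥ
      Fin.snoc (α := fun _ ↦ ZMod 2) (x j) (x j ⬝ᵥ x j) = 0 := fun i j ↦ by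
    rw [dotProduct_snoc_snoc, ← hgram, CharTwo.add_self_eq_zero]
  have hbound := two_mul_card_le_of_dotProduct_eq_zero (hli.snoc _) horth
  rw [Fintype.card_fin, Fintype.card_fin] at hbound
  omega
end

section
/- Let A ∈ SGL_n(F₂), let x₁,…,x_r ∈ F₂ⁿ be linearly independent with xᵢᵀ A⁻¹ xᵢ = 1 for all i. If rank(x₁x₁ᵀ + ⋯ + x_r x_rᵀ + yyᵀ) < r for some y ∈ F₂ⁿ, then yᵀ A⁻¹ y = 1. -/
/-!
Let `X` be the matrix with rows `xᵢ`. If `y` were outside the span of the `xᵢ`, the matrix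
`∑ xᵢxᵢᵀ + yyᵀ` would be `ZᵀZ` for a `Z` with `r + 1` independent rows, hence of rank `r + 1`.
So `y = cᵀX`, the matrix is `Xᵀ(1 + ccᵀ)X`, which has the rank of `1 + ccᵀ`, and rank `< r`
forces `det (1 + ccᵀ) = 1 + cᵀc = 0`, i.e. `cᵀc = 1`. Over `F₂` the quadratic form of the
symmetric matrix `A⁻¹` is additive, so `yᵀA⁻¹y = ∑ cᵢ² xᵢᵀA⁻¹xᵢ = ∑ cᵢ² = cᵀc = 1`.
-/

open Matrix

namespace Matrix

section Rank

variable {m n o K : Type*} [Fintype m] [Fintype o] [Field K]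

theorem rank_transpose_mul_of_linearIndependent_row {X : Matrix m n K}
    (hX : LinearIndependent K X.row) (A : Matrix m o K) : (Xᵀ * A).rank = A.rank := by
  have hinj : Function.Injective Xᵀ.mulVecLin := mulVec_injective_iff.mpr hX
  rw [Matrix.rank, mulVecLin_mul, LinearMap.range_comp,
    ← (Submodule.equivMapOfInjective _ hinj _).finrank_eq, Matrix.rank]

theorem rank_mul_of_linearIndependent_row [Fintype n] {X : Matrix m n K}
    (hX : LinearIndependent K X.row) (A : Matrix o m K) : (A * X).rank = A.rank := by
  rw [← rank_transpose, transpose_mul, rank_transpose_mul_of_linearIndependent_row hX,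
    rank_transpose]

theorem rank_transpose_mul_mul_of_linearIndependent_row [Fintype n] {X : Matrix m n K}
    (hX : LinearIndependent K X.row) (B : Matrix m m K) : (Xᵀ * B * X).rank = B.rank := by
  rw [Matrix.mul_assoc, rank_transpose_mul_of_linearIndependent_row hX,
    rank_mul_of_linearIndependent_row hX]

end Rank

theorem transpose_mul_self_eq_sum_vecMulVec {m n R : Type*} [Fintype m] [CommSemiring R]
    (X : Matrix m n R) : Xᵀ * X = ∑ i, vecMulVec (X i) (X i) := by
  ext j k
  simp [sum_apply, mul_apply, vecMulVec_apply]

theorem det_one_add_vecMulVec {m R : Type*} [Fintype m] [DecidableEq m] [CommRing R]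
    (u v : m → R) : (1 + vecMulVec u v).det = 1 + v ⬝ᵥ u := by
  rw [vecMulVec_eq Unit, det_one_add_replicateCol_mul_replicateRow]

section SumVecMulVec

variable {n K : Type*} [Fintype n] [Field K]

theorem rank_sum_vecMulVec_add_vecMulVec_of_notMem_span {r : ℕ} {x : Fin r → n → K}
    (hx : LinearIndependent K x) {y : n → K} (hy : y ∉ Submodule.span K (Set.range x)) :
    ((∑ i, vecMulVec (x i) (x i)) + vecMulVec y y).rank = r + 1 := by
  let Z : Matrix (Fin (r + 1)) n K := Matrix.of (Fin.cons y x)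
  have hZ : LinearIndependent K Z.row := linearIndependent_finCons.mpr ⟨hx, hy⟩
  have hM : (∑ i, vecMulVec (x i) (x i)) + vecMulVec y y = Zᵀ * Z := by
    rw [transpose_mul_self_eq_sum_vecMulVec, Fin.sum_univ_succ, add_comm]
    rfl
  rw [hM, rank_transpose_mul_of_linearIndependent_row hZ, hZ.rank_matrix, Fintype.card_fin]

theorem rank_sum_vecMulVec_add_vecMulVec_sum_smul {ι : Type*} [Fintype ι] [DecidableEq ι]
    {x : ι → n → K} (hx : LinearIndependent K x) (c : ι → K) :
    ((∑ i, vecMulVec (x i) (x i)) + vecMulVec (∑ i, c i • x i) (∑ i, c i • x i)).rank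
      = (1 + vecMulVec c c).rank := by
  let X : Matrix ι n K := Matrix.of x
  have hy : ∑ i, c i • x i = c ᵥ* X := (vecMul_eq_sum c X).symm
  have hM : (∑ i, vecMulVec (x i) (x i)) + vecMulVec (∑ i, c i • x i) (∑ i, c i • x i)
      = Xᵀ * (1 + vecMulVec c c) * X := by
    rw [Matrix.mul_add, Matrix.add_mul, Matrix.mul_one, transpose_mul_self_eq_sum_vecMulVec,
      mul_vecMulVec, vecMulVec_mul, mulVec_transpose, hy]
    rfl
  rw [hM, rank_transpose_mul_mul_of_linearIndependent_row (X := X) hx]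

end SumVecMulVec

section Symmetric

variable {m ι R : Type*} [Fintype m] [CommRing R] {B : Matrix m m R}

theorem IsSymm.dotProduct_mulVec_comm (hB : B.IsSymm) (u v : m → R) :
    v ⬝ᵥ B *ᵥ u = u ⬝ᵥ B *ᵥ v := by
  rw [dotProduct_mulVec, ← mulVec_transpose, dotProduct_comm, hB.eq]

theorem IsSymm.add_dotProduct_mulVec_add_of_charTwo [CharP R 2] (hB : B.IsSymm) (u v : m → R) :
    (u + v) ⬝ᵥ B *ᵥ (u + v) = u ⬝ᵥ B *ᵥ u + v ⬝ᵥ B *ᵥ v := by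
  rw [mulVec_add, add_dotProduct, dotProduct_add, dotProduct_add, hB.dotProduct_mulVec_comm u v]
  linear_combination CharTwo.add_self_eq_zero (u ⬝ᵥ B *ᵥ v)

theorem IsSymm.sum_dotProduct_mulVec_sum_of_charTwo [CharP R 2] (hB : B.IsSymm)
    (s : Finset ι) (c : ι → R) (v : ι → m → R) :
    (∑ i ∈ s, c i • v i) ⬝ᵥ B *ᵥ (∑ i ∈ s, c i • v i)
      = ∑ i ∈ s, c i * c i * (v i ⬝ᵥ B *ᵥ v i) := by
  let Q : (m → R) →+ R :=
    AddMonoidHom.mk' (fun w ↦ w ⬝ᵥ B *ᵥ w) hB.add_dotProduct_mulVec_add_of_charTwo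
  refine (map_sum Q _ s).trans (Finset.sum_congr rfl fun i _ ↦ ?_)
  simp only [Q, AddMonoidHom.mk'_apply, mulVec_smul, smul_dotProduct, dotProduct_smul,
    smul_eq_mul, mul_assoc]

end Symmetric

end Matrix

theorem diag_one_of_rank_lt_general {n r : ℕ} (A : Matrix (Fin n) (Fin n) (ZMod 2))
    (hAs : A.IsSymm)
    (x : Fin r → Fin n → ZMod 2) (hli : LinearIndependent (ZMod 2) x)
    (hx : ∀ i, x i ⬝ᵥ A⁻¹ *ᵥ x i = 1)
    (y : Fin n → ZMod 2)
    (hrank : ((∑ i, vecMulVec (x i) (x i)) + vecMulVec y y).rank < r) :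
    y ⬝ᵥ A⁻¹ *ᵥ y = 1 := by
  have hy : y ∈ Submodule.span (ZMod 2) (Set.range x) := by
    by_contra hy
    rw [rank_sum_vecMulVec_add_vecMulVec_of_notMem_span hli hy] at hrank
    omega
  obtain ⟨c, rfl⟩ := (Submodule.mem_span_range_iff_exists_fun (ZMod 2)).mp hy
  rw [rank_sum_vecMulVec_add_vecMulVec_sum_smul hli] at hrank
  have hcc : c ⬝ᵥ c = 1 := by
    have hdet : (1 + vecMulVec c c).det = 0 := by
      contrapose! hrank
      rw [rank_of_det_ne_zero hrank, Fintype.card_fin]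
    rw [det_one_add_vecMulVec] at hdet
    rw [eq_neg_of_add_eq_zero_right hdet, CharTwo.neg_eq]
  have hAinv : A⁻¹.IsSymm := by
    rw [IsSymm, transpose_nonsing_inv, hAs.eq]
  rw [hAinv.sum_dotProduct_mulVec_sum_of_charTwo]
  simp only [hx, mul_one]
  exact hcc

/-- If `A ∈ SGL_n(F₂)`, the `xᵢ` are linearly independent with `xᵢᵀ A⁻¹ xᵢ = 1` for all `i`,
and `rank(∑ xᵢxᵢᵀ + yyᵀ) < r`, then `yᵀ A⁻¹ y = 1`. -/
theorem diag_one_of_rank_lt {n r : ℕ} (A : Matrix (Fin n) (Fin n) (ZMod 2))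
    (hAs : A.IsSymm) (hA : IsUnit A)
    (x : Fin r → Fin n → ZMod 2) (hli : LinearIndependent (ZMod 2) x)
    (hx : ∀ i, x i ⬝ᵥ A⁻¹ *ᵥ x i = 1)
    (y : Fin n → ZMod 2)
    (hrank : ((∑ i, vecMulVec (x i) (x i)) + vecMulVec y y).rank < r) :
    y ⬝ᵥ A⁻¹ *ᵥ y = 1 :=
  diag_one_of_rank_lt_general A hAs x hli hx y hrank
end

section
/- Let x₁,…,x_r ∈ F₂ⁿ be linearly independent, A ∈ SGL_n(F₂), and suppose xᵢᵀ A⁻¹ xⱼ = 1 for all i, j ∈ {1,…,r}. If Σᵢ₌₁^r xᵢxᵢᵀ = Σᵢ₌₁^r yᵢyᵢᵀ for vectors y₁,…,y_r ∈ F₂ⁿ, then yᵢᵀ A⁻¹ yⱼ = 1 for all i, j. -/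
open Matrix

/-- If `xᵢᵀ A⁻¹ xⱼ = 1` for all `i, j`, the `xᵢ` are linearly independent, and
`∑ xᵢxᵢᵀ = ∑ yᵢyᵢᵀ`, then `yᵢᵀ A⁻¹ yⱼ = 1` for all `i, j`. -/
theorem all_one_of_sum_outer_eq {n r : ℕ} (A : Matrix (Fin n) (Fin n) (ZMod 2))
    (hAs : A.IsSymm) (hA : IsUnit A)
    (x y : Fin r → Fin n → ZMod 2) (hli : LinearIndependent (ZMod 2) x)
    (hx : ∀ i j, x i ⬝ᵥ A⁻¹ *ᵥ x j = 1)
    (h : (∑ i, vecMulVec (x i) (x i)) = ∑ i, vecMulVec (y i) (y i)) :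
    ∀ i j, y i ⬝ᵥ A⁻¹ *ᵥ y j = 1 := by
  classical
  set B := A⁻¹ with hB
  set X : Matrix (Fin n) (Fin r) (ZMod 2) := (Matrix.of x)ᵀ with hXdef
  set Y : Matrix (Fin n) (Fin r) (ZMod 2) := (Matrix.of y)ᵀ with hYdef
  have hsq : ∀ a : ZMod 2, a * a = a := by decide
  -- the Gram-sum equality in matrix form
  have hM : X * Xᵀ = Y * Yᵀ := by
    ext k l
    have := congrFun (congrFun h k) l
    simpa [Matrix.sum_apply, Matrix.mul_apply, vecMulVec_apply, hXdef, hYdef] using this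
  -- the all-ones condition in matrix form
  have hJ : Xᵀ * B * X = Matrix.of (fun _ _ => (1 : ZMod 2)) := by
    ext i j
    have := hx i j
    simp only [dotProduct, Matrix.mulVec, dotProduct] at this
    simp only [Matrix.mul_apply, Matrix.of_apply, hXdef, Matrix.transpose_apply,
      Finset.sum_mul]
    rw [Finset.sum_comm]
    simpa [Finset.mul_sum, mul_assoc] using this
  -- injectivity of X
  have hXinj : Function.Injective X.mulVecLin := by
    rw [← LinearMap.ker_eq_bot, LinearMap.ker_eq_bot']
    intro c hc
    have hXc : X *ᵥ c = ∑ i, c i • x i := by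
      ext k
      simp [Matrix.mulVec, dotProduct, hXdef, Finset.sum_apply, mul_comm]
    funext i
    exact (Fintype.linearIndependent_iff.mp hli) c (by rw [← hXc]; exact hc) i
  -- finrank of range of X is r
  have hrX : Module.finrank (ZMod 2) (LinearMap.range X.mulVecLin) = r := by
    rw [LinearMap.finrank_range_of_inj hXinj, Module.finrank_fin_fun]
  -- kernel of M equals kernel of Xᵀ
  have hker : LinearMap.ker (X * Xᵀ).mulVecLin = LinearMap.ker Xᵀ.mulVecLin := by
    ext v
    simp only [LinearMap.mem_ker, Matrix.mulVecLin_apply]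
    constructor
    · intro hv
      apply hXinj
      simp only [Matrix.mulVecLin_apply, Matrix.mulVec_mulVec, hv]
      simp [Matrix.mulVec_zero]
    · intro hv
      rw [← Matrix.mulVec_mulVec, hv, Matrix.mulVec_zero]
  have hrXt : Module.finrank (ZMod 2) (LinearMap.range Xᵀ.mulVecLin) = r := by
    have := Matrix.rank_transpose X
    unfold Matrix.rank at this
    rw [this]
    show X.rank = r
    unfold Matrix.rank
    exact hrX
  have hrM : Module.finrank (ZMod 2) (LinearMap.range (X * Xᵀ).mulVecLin) = r := by
    have h1 := LinearMap.finrank_range_add_finrank_ker (X * Xᵀ).mulVecLin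
    have h2 := LinearMap.finrank_range_add_finrank_ker Xᵀ.mulVecLin
    rw [hker] at h1
    rw [hrXt] at h2
    omega
  -- range M ≤ range X
  have hMX : LinearMap.range (X * Xᵀ).mulVecLin ≤ LinearMap.range X.mulVecLin := by
    rintro v ⟨w, rfl⟩
    exact ⟨Xᵀ *ᵥ w, by simp only [Matrix.mulVecLin_apply, Matrix.mulVec_mulVec]⟩
  have hMXeq : LinearMap.range (X * Xᵀ).mulVecLin = LinearMap.range X.mulVecLin :=
    Submodule.eq_of_le_of_finrank_le hMX (by rw [hrX, hrM])
  -- range M ≤ range Y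
  have hMY : LinearMap.range (X * Xᵀ).mulVecLin ≤ LinearMap.range Y.mulVecLin := by
    rintro v ⟨w, rfl⟩
    exact ⟨Yᵀ *ᵥ w, by simp only [Matrix.mulVecLin_apply, Matrix.mulVec_mulVec, ← hM]⟩
  have hrY : Module.finrank (ZMod 2) (LinearMap.range Y.mulVecLin) ≤ r := by
    have := Matrix.rank_le_width Y
    unfold Matrix.rank at this
    exact this
  have hMYeq : LinearMap.range (X * Xᵀ).mulVecLin = LinearMap.range Y.mulVecLin :=
    Submodule.eq_of_le_of_finrank_le hMY (by rw [hrM]; exact hrY)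
  -- each y k is in range of X
  have hyX : ∀ k, ∃ c, X *ᵥ c = y k := by
    intro k
    have hk : y k ∈ LinearMap.range Y.mulVecLin := by
      refine ⟨Pi.single k 1, ?_⟩
      ext l
      simp [Matrix.mulVecLin_apply, Matrix.mulVec, dotProduct, Pi.single_apply, hYdef]
    rw [← hMYeq, hMXeq] at hk
    obtain ⟨c, hc⟩ := hk
    exact ⟨c, hc⟩
  choose c hc using hyX
  set U : Matrix (Fin r) (Fin r) (ZMod 2) := Matrix.of (fun j i => c i j) with hUdef
  have hYXU : Y = X * U := by
    ext k i
    have := congrFun (hc i) k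
    simp only [Matrix.mulVec, dotProduct] at this
    simp [Matrix.mul_apply, hYdef, hUdef, ← this]
  -- left-cancellation by X
  have hcancel : ∀ P Q : Matrix (Fin r) (Fin r) (ZMod 2), X * P = X * Q → P = Q := by
    intro P Q hpq
    ext i j
    have hcol : X.mulVecLin (fun i => P i j) = X.mulVecLin (fun i => Q i j) := by
      ext k
      have := congrFun (congrFun hpq k) j
      simpa [Matrix.mulVecLin_apply, Matrix.mulVec, dotProduct, Matrix.mul_apply] using this
    exact congrFun (hXinj hcol) i
  -- right-cancellation by Xᵀ (via transpose)
  have hUU : U * Uᵀ = 1 := by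
    have h1 : X * Xᵀ = X * (U * (Uᵀ * Xᵀ)) := by
      rw [hM, hYXU, Matrix.transpose_mul]
      simp only [Matrix.mul_assoc]
    have h2 : Xᵀ = U * (Uᵀ * Xᵀ) := by
      have hcan : ∀ P Q : Matrix (Fin r) (Fin n) (ZMod 2), X * P = X * Q → P = Q := by
        intro P Q hpq
        ext i j
        have hcol : X.mulVecLin (fun i => P i j) = X.mulVecLin (fun i => Q i j) := by
          ext k
          have := congrFun (congrFun hpq k) j
          simpa [Matrix.mulVecLin_apply, Matrix.mulVec, dotProduct, Matrix.mul_apply] using this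
        exact congrFun (hXinj hcol) i
      exact hcan _ _ h1
    have h4 : X = X * U * Uᵀ := by
      have := congrArg Matrix.transpose h2
      simpa only [Matrix.transpose_mul, Matrix.transpose_transpose] using this
    have h3 : X * (U * Uᵀ) = X * (1 : Matrix (Fin r) (Fin r) (ZMod 2)) := by
      rw [Matrix.mul_one, ← Matrix.mul_assoc, ← h4]
    exact hcancel _ _ h3
  have hUtU : Uᵀ * U = 1 := mul_eq_one_comm.mp hUU
  -- row sums of U are 1
  have hrow : ∀ i, ∑ j, U i j = 1 := by
    intro i
    have := congrFun (congrFun hUU i) i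
    simp only [Matrix.mul_apply, Matrix.transpose_apply, Matrix.one_apply_eq] at this
    simpa [hsq] using this
  -- column sums of U are 1
  have hcol : ∀ j, ∑ k, U k j = 1 := by
    intro j
    have := congrFun (congrFun hUtU j) j
    simp only [Matrix.mul_apply, Matrix.transpose_apply, Matrix.one_apply_eq] at this
    simpa [hsq] using this
  -- final computation
  intro i j
  have key : y i ⬝ᵥ B *ᵥ y j = (Yᵀ * B * Y) i j := by
    simp only [Matrix.mul_apply, dotProduct, Matrix.mulVec, dotProduct, hYdef,
      Matrix.transpose_apply, Matrix.of_apply, Finset.sum_mul, Finset.mul_sum, mul_assoc]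
    rw [Finset.sum_comm]
  rw [key, hYXU]
  have hfin : (X * U)ᵀ * B * (X * U) = Uᵀ * (Xᵀ * B * X) * U := by
    rw [Matrix.transpose_mul]
    simp only [Matrix.mul_assoc]
  rw [hfin, hJ]
  simp only [Matrix.mul_apply, Matrix.transpose_apply, Matrix.of_apply, mul_one]
  rw [← Finset.mul_sum, hcol i, hcol j, one_mul]
end

section
/- Let A, B ∈ SGL_n(F₂) with B − A = Σᵢ₌₁^r xᵢxᵢᵀ for linearly independent x₁,…,x_r ∈ F₂ⁿ, where 2 ≤ r ≤ n and the matrix [xᵢᵀ A⁻¹ xⱼ]_{i,j=1}^r has rank one and trace zero. Then the distance between A and B in the graph Γ_n is at least r+2. -/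
open Matrix

/-- The graph `Γ_n` on invertible symmetric `n×n` matrices over `F₂`, with an edge between
`A` and `B` iff `rank (A - B) = 1`. -/
def Gamma (n : ℕ) :
    SimpleGraph {A : Matrix (Fin n) (Fin n) (ZMod 2) // A.IsSymm ∧ IsUnit A} where
  Adj A B := (A.1 - B.1).rank = 1
  symm := by
    constructor
    intro A B h
    beta_reduce at h ⊢
    have e : B.1 - A.1 = A.1 - B.1 := by
      ext i j
      simp only [Matrix.sub_apply]
      exact (by decide : ∀ a b : ZMod 2, a - b = b - a) _ _
    rw [e]; exact h
  loopless := by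
    constructor
    intro A h
    simp only [sub_self, Matrix.rank_zero] at h
    exact absurd h (by norm_num)

/-!
Write `β_S(a, b) = aᵀ S⁻¹ b`. Over `F₂`, `S + wwᵀ` is invertible exactly when `β_S(w, w) = 0`,
and then `(S + wwᵀ)⁻¹ = S⁻¹ - S⁻¹wwᵀS⁻¹`; moreover every rank-one symmetric matrix is `wwᵀ`, and
`a ↦ β_S(a, a)` is linear. The hypotheses say `β_A(xᵢ, xⱼ) = uᵢuⱼ` with `u ≠ 0` and `∑ uᵢ = 0`.

Lower bound: along a walk `A = S₀, …, S_k = B` the steps are `S_{j+1} - S_j = wⱼwⱼᵀ` with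
`∑ wⱼwⱼᵀ = ∑ xᵢxᵢᵀ`, and `k ≤ r + 1` forces `span w = span x =: U`. On `U` we have
`β_A(a, b) = β_A(a, a) β_A(b, b)`, so an isotropic step lying in `U` leaves `β` on `U` unchanged,
and by induction every `wⱼ` is `β_A`-isotropic. The diagonal of `β_A` being linear, it vanishes
on `span w = U`, so `uᵢ = β_A(xᵢ, xᵢ) = 0` for all `i`.

Upper bound (`dist` is `0` between unreachable vertices, so reachability is part of the claim):
pick `y` with `β_A(y, y) = 0` and `β_A(xᵢ, y) = uᵢ + ε δᵢⱼ` for some `j` with `uⱼ = 1`. From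
`A + yyᵀ` the `xₜ`, `t ≠ j`, are pairwise orthogonal and isotropic; adding them makes `xⱼ`
isotropic because `∑ uᵢ = 0`; adding `xⱼ` reaches `B + yyᵀ`, which is adjacent to `B`.
-/

lemma ZMod.mul_self_eq_self_mod_two (a : ZMod 2) : a * a = a := by
  fin_cases a <;> rfl

lemma ZMod.eq_one_of_ne_zero_mod_two {a : ZMod 2} (h : a ≠ 0) : a = 1 := by
  revert a; decide

lemma exists_mem_ker_map_eq_add_single {V ι : Type*} [AddCommGroup V] [Module (ZMod 2) V]
    [Fintype ι] [DecidableEq ι] (φ : V →ₗ[ZMod 2] ι → ZMod 2) (q : V →ₗ[ZMod 2] ZMod 2)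
    (hφ : ∀ j, Pi.single j 1 ∈ LinearMap.range φ) {u : ι → ZMod 2} (hu : u ≠ 0) :
    ∃ y j ε, u j = 1 ∧ q y = 0 ∧ φ y = u + Pi.single j ε := by
  choose z hz using hφ
  have hφu : φ (∑ i, u i • z i) = u := by
    ext i
    simp [map_sum, hz, Finset.sum_apply, Pi.single_apply]
  by_cases h₀ : q (∑ i, u i • z i) = 0
  · obtain ⟨j, hj⟩ := Function.ne_iff.mp hu
    exact ⟨_, j, 0, ZMod.eq_one_of_ne_zero_mod_two hj, h₀, by simp [hφu]⟩
  · obtain ⟨j, -, hj⟩ := Finset.exists_ne_zero_of_sum_ne_zero (s := Finset.univ)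
      (f := fun i => u i * q (z i)) (by simpa [map_sum] using h₀)
    obtain ⟨huj, hqj⟩ := mul_ne_zero_iff.mp hj
    refine ⟨∑ i, u i • z i + z j, j, 1, ZMod.eq_one_of_ne_zero_mod_two huj, ?_,
      by rw [map_add, hφu, hz]⟩
    rw [map_add, ZMod.eq_one_of_ne_zero_mod_two h₀, ZMod.eq_one_of_ne_zero_mod_two hqj]
    rfl

namespace Matrix

section CommRing

variable {m : Type*} [Fintype m] {R : Type*} [CommRing R]

lemma IsSymm.dotProduct_mulVec_comm_s16 {C : Matrix m m R} (hC : C.IsSymm) (a b : m → R) :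
    a ⬝ᵥ C *ᵥ b = b ⬝ᵥ C *ᵥ a := by
  rw [dotProduct_mulVec, ← mulVec_transpose, hC, dotProduct_comm]

lemma dotProduct_mul_vecMulVec_mul_mulVec (M N : Matrix m m R) (a b u v : m → R) :
    a ⬝ᵥ (M * vecMulVec u v * N) *ᵥ b = (a ⬝ᵥ M *ᵥ u) * (v ⬝ᵥ N *ᵥ b) := by
  rw [mul_vecMulVec, vecMulVec_mul, vecMulVec_mulVec, op_smul_eq_smul, dotProduct_smul,
    smul_eq_mul, dotProduct_mulVec v N b, mul_comm]

variable [DecidableEq m] {S : Matrix m m R} {u v : m → R}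

lemma mul_inv_sub_eq_one_of_dotProduct_eq_zero (hS : IsUnit S) (h : v ⬝ᵥ S⁻¹ *ᵥ u = 0) :
    (S + vecMulVec u v) * (S⁻¹ - S⁻¹ * vecMulVec u v * S⁻¹) = 1 := by
  have hSS : S * S⁻¹ = 1 := mul_nonsing_inv S ((isUnit_iff_isUnit_det S).mp hS)
  have hsq : vecMulVec u v * S⁻¹ * vecMulVec u v = 0 := by
    rw [vecMulVec_mul, vecMulVec_mul_vecMulVec, ← dotProduct_mulVec, h, zero_smul,
      vecMulVec_zero]
  calc (S + vecMulVec u v) * (S⁻¹ - S⁻¹ * vecMulVec u v * S⁻¹)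
      = S * S⁻¹ - S * S⁻¹ * vecMulVec u v * S⁻¹ + vecMulVec u v * S⁻¹
          - vecMulVec u v * S⁻¹ * vecMulVec u v * S⁻¹ := by noncomm_ring
    _ = 1 := by rw [hsq, hSS]; noncomm_ring

lemma isUnit_add_vecMulVec (hS : IsUnit S) (h : v ⬝ᵥ S⁻¹ *ᵥ u = 0) :
    IsUnit (S + vecMulVec u v) :=
  (isUnit_iff_isUnit_det _).mpr
    (isUnit_det_of_right_inverse (mul_inv_sub_eq_one_of_dotProduct_eq_zero hS h))

lemma inv_add_vecMulVec (hS : IsUnit S) (h : v ⬝ᵥ S⁻¹ *ᵥ u = 0) :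
    (S + vecMulVec u v)⁻¹ = S⁻¹ - S⁻¹ * vecMulVec u v * S⁻¹ :=
  inv_eq_right_inv (mul_inv_sub_eq_one_of_dotProduct_eq_zero hS h)

lemma dotProduct_inv_add_vecMulVec_mulVec (hS : IsUnit S) (h : v ⬝ᵥ S⁻¹ *ᵥ u = 0)
    (a b : m → R) :
    a ⬝ᵥ (S + vecMulVec u v)⁻¹ *ᵥ b = a ⬝ᵥ S⁻¹ *ᵥ b - (a ⬝ᵥ S⁻¹ *ᵥ u) * (v ⬝ᵥ S⁻¹ *ᵥ b) := by
  rw [inv_add_vecMulVec hS h, sub_mulVec, dotProduct_sub, dotProduct_mul_vecMulVec_mul_mulVec]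

end CommRing

section Field

variable {m n : Type*} [Fintype n] {K : Type*} [Field K]

lemma rank_eq_zero_iff {M : Matrix m n K} : M.rank = 0 ↔ M = 0 := by
  rw [rank, Submodule.finrank_eq_zero, LinearMap.range_eq_bot]
  refine ⟨fun h => ?_, fun h => by rw [h]; ext; simp⟩
  classical
  ext i j
  simpa using congrFun (LinearMap.congr_fun h (Pi.single j 1)) i

lemma rank_vecMulVec_self {w : n → K} (hw : w ≠ 0) : (vecMulVec w w).rank = 1 :=
  le_antisymm (rank_vecMulVec_le w w) (Nat.one_le_iff_ne_zero.mpr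
    (fun h => hw (by simpa using rank_eq_zero_iff.mp h)))

lemma exists_vecMulVec_of_rank_le_one {M : Matrix m n K} (h : M.rank ≤ 1) :
    ∃ a b, M = vecMulVec a b := by
  obtain ⟨a, ha⟩ := finrank_le_one_iff.mp h
  choose b hb using fun j => ha ⟨M.col j, by
    rw [range_mulVecLin]; exact Submodule.subset_span ⟨j, rfl⟩⟩
  refine ⟨a, b, ext fun i j => ?_⟩
  have := congrArg (fun v : LinearMap.range M.mulVecLin => (v : m → K) i) (hb j)
  simp only [SetLike.val_smul, Pi.smul_apply, smul_eq_mul, col_apply] at this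
  rw [vecMulVec_apply, ← this, mul_comm]

variable {ι κ : Type*} [Fintype ι] [Fintype κ]

lemma exists_dotProduct_eq_of_linearIndependent {x : ι → n → K} (hx : LinearIndependent K x)
    (b : ι → K) : ∃ y, ∀ i, x i ⬝ᵥ y = b i := by
  have htop : LinearMap.range (of x).mulVecLin = ⊤ :=
    Submodule.eq_top_of_finrank_eq
      (by rw [← rank, LinearIndependent.rank_matrix (M := of x) hx,
        Module.finrank_fintype_fun_eq_card])
  obtain ⟨y, hy⟩ : b ∈ LinearMap.range (of x).mulVecLin := htop ▸ Submodule.mem_top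
  exact ⟨y, fun i => congrFun hy i⟩

lemma sum_vecMulVec_self_mulVec_s16 (v : ι → n → K) (y : n → K) :
    (∑ i, vecMulVec (v i) (v i)) *ᵥ y = ∑ i, (v i ⬝ᵥ y) • v i := by
  simp only [sum_mulVec, vecMulVec_mulVec, op_smul_eq_smul]

lemma range_sum_vecMulVec_self_le (v : ι → n → K) :
    LinearMap.range (∑ i, vecMulVec (v i) (v i)).mulVecLin ≤ Submodule.span K (Set.range v) := by
  rintro _ ⟨y, rfl⟩
  rw [mulVecLin_apply, sum_vecMulVec_self_mulVec_s16]
  exact Submodule.sum_mem _ fun i _ => Submodule.smul_mem _ _ (Submodule.subset_span ⟨i, rfl⟩)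

lemma range_sum_vecMulVec_self [DecidableEq ι] {v : ι → n → K} (hv : LinearIndependent K v) :
    LinearMap.range (∑ i, vecMulVec (v i) (v i)).mulVecLin = Submodule.span K (Set.range v) := by
  refine (range_sum_vecMulVec_self_le v).antisymm (Submodule.span_le.mpr ?_)
  rintro _ ⟨i, rfl⟩
  obtain ⟨y, hy⟩ := exists_dotProduct_eq_of_linearIndependent hv (Pi.single i 1)
  refine ⟨y, ?_⟩
  rw [mulVecLin_apply, sum_vecMulVec_self_mulVec_s16]
  simp [hy, Pi.single_apply]

lemma span_eq_of_sum_vecMulVec_self_eq [DecidableEq ι] [DecidableEq κ] {x : ι → n → K}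
    (hx : LinearIndependent K x) {w : κ → n → K} (hcard : Fintype.card κ ≤ Fintype.card ι + 1)
    (h : ∑ j, vecMulVec (w j) (w j) = ∑ i, vecMulVec (x i) (x i)) :
    Submodule.span K (Set.range w) = Submodule.span K (Set.range x) := by
  have hle : Submodule.span K (Set.range x) ≤ Submodule.span K (Set.range w) := by
    rw [← range_sum_vecMulVec_self hx, ← h]
    exact range_sum_vecMulVec_self_le w
  by_cases hw : LinearIndependent K w
  · rw [← range_sum_vecMulVec_self hw, h, range_sum_vecMulVec_self hx]
  refine (Submodule.eq_of_le_of_finrank_le hle ?_).symm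
  have hlt : (Set.range w).finrank K < Fintype.card κ :=
    lt_of_le_of_ne (finrank_range_le_card w)
      (fun heq => hw (linearIndependent_iff_card_eq_finrank_span.mpr heq.symm))
  rw [finrank_span_eq_card hx]
  exact Nat.le_of_lt_succ (hlt.trans_le hcard)

end Field

section ZModTwo

lemma neg_eq_self_mod_two {m n : Type*} (M : Matrix m n (ZMod 2)) : -M = M := by
  ext i j; exact ZMod.neg_eq_self_mod_two _

variable {m : Type*} [Fintype m]

lemma IsSymm.eq_vecMulVec_diag {M : Matrix m m (ZMod 2)} (hM : M.IsSymm) (h : M.rank ≤ 1) :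
    M = vecMulVec M.diag M.diag := by
  obtain ⟨a, b, rfl⟩ := exists_vecMulVec_of_rank_le_one h
  ext i j
  have hij : a i * b j = a j * b i := by
    simpa [vecMulVec_apply] using congrFun (congrFun hM j) i
  simp only [vecMulVec_apply, diag_apply]
  calc a i * b j = (a i * b j) * (a j * b i) := by rw [← hij, ZMod.mul_self_eq_self_mod_two]
    _ = a i * b i * (a j * b j) := by ring

lemma dotProduct_mulVec_eq_mul_of_mem_span {ι : Type*} [Fintype ι] {C : Matrix m m (ZMod 2)}
    {x : ι → m → ZMod 2} {u : ι → ZMod 2} (hG : ∀ i j, x i ⬝ᵥ C *ᵥ x j = u i * u j)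
    {a b : m → ZMod 2} (ha : a ∈ Submodule.span (ZMod 2) (Set.range x))
    (hb : b ∈ Submodule.span (ZMod 2) (Set.range x)) :
    a ⬝ᵥ C *ᵥ b = (a ⬝ᵥ C *ᵥ a) * (b ⬝ᵥ C *ᵥ b) := by
  have key : ∀ c d : ι → ZMod 2,
      (∑ i, c i • x i) ⬝ᵥ C *ᵥ ∑ j, d j • x j = (c ⬝ᵥ u) * (d ⬝ᵥ u) := fun c d => by
    simp only [sum_dotProduct, mulVec_sum, dotProduct_sum, mulVec_smul, smul_dotProduct,
      dotProduct_smul, hG, smul_eq_mul]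
    rw [dotProduct, dotProduct, Finset.sum_mul_sum, Finset.sum_comm]
    refine Finset.sum_congr rfl fun j _ => ?_
    rw [Finset.mul_sum]
    exact Finset.sum_congr rfl fun i _ => by ring
  obtain ⟨c, rfl⟩ := (Submodule.mem_span_range_iff_exists_fun _).mp ha
  obtain ⟨d, rfl⟩ := (Submodule.mem_span_range_iff_exists_fun _).mp hb
  rw [key, key, key, ZMod.mul_self_eq_self_mod_two, ZMod.mul_self_eq_self_mod_two]

variable [DecidableEq m]

lemma IsSymm.dotProduct_mulVec_self {C : Matrix m m (ZMod 2)} (hC : C.IsSymm) (y : m → ZMod 2) :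
    y ⬝ᵥ C *ᵥ y = C.diag ⬝ᵥ y := by
  let q : (m → ZMod 2) →+ ZMod 2 :=
    { toFun := fun y => y ⬝ᵥ C *ᵥ y
      map_zero' := zero_dotProduct _
      map_add' := fun y z => by
        simp only [mulVec_add, dotProduct_add, add_dotProduct, hC.dotProduct_mulVec_comm_s16 z y]
        linear_combination CharTwo.add_self_eq_zero (y ⬝ᵥ C *ᵥ z) }
  have hq := AddMonoidHom.functions_ext _ q (dotProductEquiv (ZMod 2) m C.diag).toAddMonoidHom
    fun i a => by
      simp only [q, AddMonoidHom.coe_mk, ZeroHom.coe_mk, LinearMap.toAddMonoidHom_coe,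
        dotProductEquiv_apply_apply, mulVec_single, single_dotProduct, dotProduct_single,
        diag_apply, Pi.smul_apply, op_smul_eq_smul, smul_eq_mul, col_apply]
      rw [← mul_assoc, ZMod.mul_self_eq_self_mod_two, mul_comm]
  exact DFunLike.congr_fun hq y

lemma dotProduct_inv_mulVec_self_eq_zero {S : Matrix m m (ZMod 2)} (hS : IsUnit S)
    {w : m → ZMod 2} (hT : IsUnit (S + vecMulVec w w)) : w ⬝ᵥ S⁻¹ *ᵥ w = 0 := by
  have hunit : ∀ a : ZMod 2, IsUnit a → a = 1 := by decide
  have hdet := det_add_replicateCol_mul_replicateRow (ι := Unit)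
    ((isUnit_iff_isUnit_det S).mp hS) w w
  rw [← vecMulVec_eq, hunit _ ((isUnit_iff_isUnit_det _).mp hT),
    hunit _ ((isUnit_iff_isUnit_det _).mp hS), one_mul, det_unique] at hdet
  rw [dotProduct_mulVec]
  simpa [replicateRow, replicateCol, mul_apply, dotProduct, vecMul] using hdet

lemma exists_isotropic_dotProduct_mulVec_eq_add_single {ι : Type*} [Fintype ι] [DecidableEq ι]
    {C : Matrix m m (ZMod 2)} (hC : C.IsSymm) (hCu : IsUnit C) {x : ι → m → ZMod 2}
    (hx : LinearIndependent (ZMod 2) x) {u : ι → ZMod 2} (hu : u ≠ 0) :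
    ∃ y j ε, u j = 1 ∧ y ⬝ᵥ C *ᵥ y = 0 ∧
      ∀ s, x s ⬝ᵥ C *ᵥ y = (u + Pi.single j ε : ι → ZMod 2) s := by
  have hφ : ∀ y i, ((of x * C) *ᵥ y) i = x i ⬝ᵥ C *ᵥ y := fun y i => by
    rw [← mulVec_mulVec]; rfl
  have hsurj : ∀ j, Pi.single j 1 ∈ LinearMap.range (of x * C).mulVecLin := fun j => by
    obtain ⟨y, hy⟩ := exists_dotProduct_eq_of_linearIndependent hx (Pi.single j 1)
    refine ⟨C⁻¹ *ᵥ y, funext fun i => ?_⟩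
    rw [mulVecLin_apply, hφ, mulVec_mulVec, mul_nonsing_inv _ ((isUnit_iff_isUnit_det C).mp hCu),
      one_mulVec, hy]
  obtain ⟨y, j, ε, huj, hqy, hφy⟩ :=
    exists_mem_ker_map_eq_add_single _ (dotProductEquiv (ZMod 2) m C.diag) hsurj hu
  refine ⟨y, j, ε, huj, ?_, fun s => by rw [← hφ, ← mulVecLin_apply, hφy]⟩
  simpa [hC.dotProduct_mulVec_self] using hqy

end ZModTwo

end Matrix

abbrev SGL (n : ℕ) := {A : Matrix (Fin n) (Fin n) (ZMod 2) // A.IsSymm ∧ IsUnit A}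

namespace Gamma

variable {n : ℕ}

lemma sub_eq_vecMulVec_diag_of_adj {S T : SGL n} (h : (Gamma n).Adj S T) :
    T.1 - S.1 = vecMulVec (T.1 - S.1).diag (T.1 - S.1).diag := by
  refine (T.2.1.sub S.2.1).eq_vecMulVec_diag (le_of_eq ?_)
  rw [← neg_sub, neg_eq_self_mod_two]; exact h

lemma reachable_of_sub_eq_vecMulVec {S T : SGL n} {w : Fin n → ZMod 2}
    (h : T.1 - S.1 = vecMulVec w w) : (Gamma n).Reachable S T := by
  by_cases hw : w = 0
  · rw [hw, vecMulVec_zero, sub_eq_zero] at h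
    rw [Subtype.ext h]
  · refine SimpleGraph.Adj.reachable (show (S.1 - T.1).rank = 1 from ?_)
    rw [← neg_sub, h, neg_eq_self_mod_two]
    exact rank_vecMulVec_self hw

lemma exists_reachable_add_vecMulVec (S : SGL n) {w : Fin n → ZMod 2}
    (hw : w ⬝ᵥ S.1⁻¹ *ᵥ w = 0) :
    ∃ T : SGL n, T.1 = S.1 + vecMulVec w w ∧ (Gamma n).Reachable S T ∧
      ∀ a b, a ⬝ᵥ T.1⁻¹ *ᵥ b = a ⬝ᵥ S.1⁻¹ *ᵥ b - (a ⬝ᵥ S.1⁻¹ *ᵥ w) * (w ⬝ᵥ S.1⁻¹ *ᵥ b) :=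
  ⟨⟨S.1 + vecMulVec w w, S.2.1.add (transpose_vecMulVec w w), isUnit_add_vecMulVec S.2.2 hw⟩,
    rfl, reachable_of_sub_eq_vecMulVec (add_sub_cancel_left _ _),
    dotProduct_inv_add_vecMulVec_mulVec S.2.2 hw⟩

lemma exists_reachable_add_sum_vecMulVec (S : SGL n) {ι : Type*} (z : ι → Fin n → ZMod 2)
    (s : Finset ι) (hz : ∀ i ∈ s, ∀ j ∈ s, z i ⬝ᵥ S.1⁻¹ *ᵥ z j = 0) :
    ∃ T : SGL n, T.1 = S.1 + ∑ i ∈ s, vecMulVec (z i) (z i) ∧ (Gamma n).Reachable S T ∧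
      ∀ a b, a ⬝ᵥ T.1⁻¹ *ᵥ b =
        a ⬝ᵥ S.1⁻¹ *ᵥ b - ∑ i ∈ s, (a ⬝ᵥ S.1⁻¹ *ᵥ z i) * (z i ⬝ᵥ S.1⁻¹ *ᵥ b) := by
  classical
  induction s using Finset.induction_on with
  | empty => exact ⟨S, by simp, .refl _, by simp⟩
  | insert i s hi ih =>
    have hz' : ∀ l ∈ s, z l ⬝ᵥ S.1⁻¹ *ᵥ z i = 0 ∧ z i ⬝ᵥ S.1⁻¹ *ᵥ z l = 0 := fun l hl =>
      ⟨hz l (Finset.mem_insert_of_mem hl) i (Finset.mem_insert_self i s),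
        hz i (Finset.mem_insert_self i s) l (Finset.mem_insert_of_mem hl)⟩
    obtain ⟨T, hT, hST, hform⟩ := ih fun a ha b hb =>
      hz a (Finset.mem_insert_of_mem ha) b (Finset.mem_insert_of_mem hb)
    have hleft : ∀ a, a ⬝ᵥ T.1⁻¹ *ᵥ z i = a ⬝ᵥ S.1⁻¹ *ᵥ z i := fun a => by
      rw [hform, Finset.sum_eq_zero fun l hl => by rw [(hz' l hl).1, mul_zero], sub_zero]
    have hright : ∀ b, z i ⬝ᵥ T.1⁻¹ *ᵥ b = z i ⬝ᵥ S.1⁻¹ *ᵥ b := fun b => by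
      rw [hform, Finset.sum_eq_zero fun l hl => by rw [(hz' l hl).2, zero_mul], sub_zero]
    obtain ⟨T', hT', hTT', hform'⟩ := exists_reachable_add_vecMulVec T (w := z i)
      (by rw [hleft, hz i (Finset.mem_insert_self i s) i (Finset.mem_insert_self i s)])
    refine ⟨T', by rw [hT', hT, Finset.sum_insert hi]; abel, hST.trans hTT', fun a b => ?_⟩
    rw [hform', hform, hleft, hright, Finset.sum_insert hi]
    ring

lemma reachable_of_gram_eq_vecMulVec (A B : SGL n) {ι : Type*} [Fintype ι] [DecidableEq ι]
    {x : ι → Fin n → ZMod 2} (hx : LinearIndependent (ZMod 2) x)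
    (hB : B.1 - A.1 = ∑ i, vecMulVec (x i) (x i)) {u : ι → ZMod 2} (hu : u ≠ 0)
    (hG : ∀ i j, x i ⬝ᵥ A.1⁻¹ *ᵥ x j = u i * u j) (htr : ∑ i, u i = 0) :
    (Gamma n).Reachable A B := by
  obtain ⟨y, j, ε, huj, hyy, hxy⟩ := exists_isotropic_dotProduct_mulVec_eq_add_single A.2.1.inv
    (isUnit_nonsing_inv_iff.mpr A.2.2) hx hu
  set v := u + Pi.single j ε
  have hv : ∀ s, s ≠ j → v s = u s := fun s hs => by simp [v, Pi.single_eq_of_ne hs]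
  have hvj : v j = 1 + ε := by simp [v, huj]
  obtain ⟨S₁, hS₁, hAS₁, hform₁⟩ := exists_reachable_add_vecMulVec A hyy
  have hG₁ : ∀ s t, x s ⬝ᵥ S₁.1⁻¹ *ᵥ x t = u s * u t - v s * v t := fun s t => by
    rw [hform₁, hG, hxy, A.2.1.inv.dotProduct_mulVec_comm_s16 y, hxy]
  obtain ⟨S₂, hS₂, hS₁S₂, hform₂⟩ := exists_reachable_add_sum_vecMulVec S₁ x
    (Finset.univ.erase j) fun s hs t ht => by
      rw [hG₁, hv s (Finset.ne_of_mem_erase hs), hv t (Finset.ne_of_mem_erase ht), sub_self]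
  have hterm : ∀ t ∈ Finset.univ.erase j,
      (x j ⬝ᵥ S₁.1⁻¹ *ᵥ x t) * (x t ⬝ᵥ S₁.1⁻¹ *ᵥ x j) = ε * u t := fun t ht => by
    rw [hG₁, hG₁, hvj, hv t (Finset.ne_of_mem_erase ht), huj]
    exact (by decide : ∀ a e : ZMod 2, (1 * a - (1 + e) * a) * (a * 1 - a * (1 + e)) = e * a) _ _
  -- `∑_{t ≠ j} u t = u j = 1` is what makes `x j` isotropic once the other `x t` are added.
  obtain ⟨S₃, hS₃, hS₂S₃, -⟩ := exists_reachable_add_vecMulVec S₂ (w := x j) (by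
    rw [hform₂, Finset.sum_congr rfl hterm, ← Finset.mul_sum,
      Finset.sum_erase_eq_sub (Finset.mem_univ j), htr, hG₁, hvj, huj]
    exact (by decide : ∀ e : ZMod 2, 1 * 1 - (1 + e) * (1 + e) - e * (0 - 1) = 0) _)
  have hS₃B : S₃.1 - B.1 = vecMulVec y y := by
    rw [hS₃, hS₂, hS₁, ← sub_add_cancel B.1 A.1, hB,
      ← Finset.sum_erase_add _ _ (Finset.mem_univ j)]
    abel
  exact hAS₁.trans (hS₁S₂.trans (hS₂S₃.trans (reachable_of_sub_eq_vecMulVec hS₃B).symm))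

lemma dotProduct_inv_mulVec_eq_of_add_vecMulVec {A S T : SGL n} {w : Fin n → ZMod 2}
    (hT : T.1 - S.1 = vecMulVec w w) {U : Submodule (ZMod 2) (Fin n → ZMod 2)} (hw : w ∈ U)
    (hA : ∀ a ∈ U, ∀ b ∈ U, a ⬝ᵥ A.1⁻¹ *ᵥ b = (a ⬝ᵥ A.1⁻¹ *ᵥ a) * (b ⬝ᵥ A.1⁻¹ *ᵥ b))
    (hS : ∀ a ∈ U, ∀ b ∈ U, a ⬝ᵥ S.1⁻¹ *ᵥ b = a ⬝ᵥ A.1⁻¹ *ᵥ b) :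
    w ⬝ᵥ A.1⁻¹ *ᵥ w = 0 ∧ ∀ a ∈ U, ∀ b ∈ U, a ⬝ᵥ T.1⁻¹ *ᵥ b = a ⬝ᵥ A.1⁻¹ *ᵥ b := by
  rw [sub_eq_iff_eq_add'] at hT
  have hq : w ⬝ᵥ S.1⁻¹ *ᵥ w = 0 := dotProduct_inv_mulVec_self_eq_zero S.2.2 (hT ▸ T.2.2)
  have hqA : w ⬝ᵥ A.1⁻¹ *ᵥ w = 0 := hS w hw w hw ▸ hq
  refine ⟨hqA, fun a ha b hb => ?_⟩
  rw [hT, dotProduct_inv_add_vecMulVec_mulVec S.2.2 hq, hS a ha b hb, hS a ha w hw,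
    hA a ha w hw, hqA, mul_zero, zero_mul, sub_zero]

def stepVec {A B : SGL n} (p : (Gamma n).Walk A B) (j : ℕ) : Fin n → ZMod 2 :=
  ((p.getVert (j + 1)).1 - (p.getVert j).1).diag

lemma getVert_succ_sub_getVert {A B : SGL n} (p : (Gamma n).Walk A B) {j : ℕ}
    (hj : j < p.length) :
    (p.getVert (j + 1)).1 - (p.getVert j).1 = vecMulVec (stepVec p j) (stepVec p j) :=
  sub_eq_vecMulVec_diag_of_adj (p.adj_getVert_succ hj)

lemma sum_vecMulVec_stepVec {A B : SGL n} (p : (Gamma n).Walk A B) :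
    ∑ j : Fin p.length, vecMulVec (stepVec p j) (stepVec p j) = B.1 - A.1 := by
  rw [Fin.sum_univ_eq_sum_range (fun j => vecMulVec (stepVec p j) (stepVec p j)),
    Finset.sum_congr rfl fun j hj => (getVert_succ_sub_getVert p (Finset.mem_range.mp hj)).symm,
    Finset.sum_range_sub (fun j => (p.getVert j).1), p.getVert_length, p.getVert_zero]

lemma dotProduct_inv_getVert_mulVec_eq {A B : SGL n} (p : (Gamma n).Walk A B)
    {U : Submodule (ZMod 2) (Fin n → ZMod 2)} (hU : ∀ j < p.length, stepVec p j ∈ U)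
    (hA : ∀ a ∈ U, ∀ b ∈ U, a ⬝ᵥ A.1⁻¹ *ᵥ b = (a ⬝ᵥ A.1⁻¹ *ᵥ a) * (b ⬝ᵥ A.1⁻¹ *ᵥ b))
    {j : ℕ} (hj : j ≤ p.length) :
    ∀ a ∈ U, ∀ b ∈ U, a ⬝ᵥ (p.getVert j).1⁻¹ *ᵥ b = a ⬝ᵥ A.1⁻¹ *ᵥ b := by
  induction j with
  | zero => simp
  | succ j ih =>
    exact (dotProduct_inv_mulVec_eq_of_add_vecMulVec (getVert_succ_sub_getVert p hj)
      (hU j hj) hA (ih (by omega))).2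

lemma card_add_two_le_length (A B : SGL n) {ι : Type*} [Fintype ι] [DecidableEq ι]
    {x : ι → Fin n → ZMod 2} (hx : LinearIndependent (ZMod 2) x)
    (hB : B.1 - A.1 = ∑ i, vecMulVec (x i) (x i)) {u : ι → ZMod 2} (hu : u ≠ 0)
    (hG : ∀ i j, x i ⬝ᵥ A.1⁻¹ *ᵥ x j = u i * u j) (p : (Gamma n).Walk A B) :
    Fintype.card ι + 2 ≤ p.length := by
  by_contra! hlen
  set U := Submodule.span (ZMod 2) (Set.range x)
  have hspan : Submodule.span (ZMod 2) (Set.range fun j : Fin p.length => stepVec p j) = U :=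
    span_eq_of_sum_vecMulVec_self_eq hx (by simp only [Fintype.card_fin]; omega)
      (by rw [sum_vecMulVec_stepVec, hB])
  have hwU : ∀ j < p.length, stepVec p j ∈ U := fun j hj =>
    hspan ▸ Submodule.subset_span ⟨⟨j, hj⟩, rfl⟩
  have hA : ∀ a ∈ U, ∀ b ∈ U, a ⬝ᵥ A.1⁻¹ *ᵥ b = (a ⬝ᵥ A.1⁻¹ *ᵥ a) * (b ⬝ᵥ A.1⁻¹ *ᵥ b) :=
    fun a ha b hb => dotProduct_mulVec_eq_mul_of_mem_span hG ha hb
  have hU : U ≤ LinearMap.ker (dotProductEquiv (ZMod 2) (Fin n) A.1⁻¹.diag) := by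
    rw [← hspan, Submodule.span_le]
    rintro _ ⟨j, rfl⟩
    have hiso := (dotProduct_inv_mulVec_eq_of_add_vecMulVec (getVert_succ_sub_getVert p j.2)
      (hwU j j.2) hA (dotProduct_inv_getVert_mulVec_eq p hwU hA j.2.le)).1
    simpa [← A.2.1.inv.dotProduct_mulVec_self] using hiso
  refine hu (funext fun i => ?_)
  have hi := hU (Submodule.subset_span ⟨i, rfl⟩)
  rwa [LinearMap.mem_ker, dotProductEquiv_apply_apply, ← A.2.1.inv.dotProduct_mulVec_self, hG,
    ZMod.mul_self_eq_self_mod_two] at hi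

end Gamma

theorem dist_ge_of_gram_rank_one_trace_zero_general {n r : ℕ}
    (A B : {A : Matrix (Fin n) (Fin n) (ZMod 2) // A.IsSymm ∧ IsUnit A})
    (x : Fin r → Fin n → ZMod 2) (hli : LinearIndependent (ZMod 2) x)
    (hB : B.1 - A.1 = ∑ i, vecMulVec (x i) (x i))
    (hrank : (Matrix.of fun i j : Fin r => x i ⬝ᵥ (A.1)⁻¹ *ᵥ x j).rank = 1)
    (htr : (Matrix.of fun i j : Fin r => x i ⬝ᵥ (A.1)⁻¹ *ᵥ x j).trace = 0) :
    r + 2 ≤ (Gamma n).dist A B := by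
  set G := Matrix.of fun i j : Fin r => x i ⬝ᵥ (A.1)⁻¹ *ᵥ x j
  have hGsym : G.IsSymm := ext fun i j => A.2.1.inv.dotProduct_mulVec_comm_s16 (x j) (x i)
  have hG : ∀ i j, x i ⬝ᵥ A.1⁻¹ *ᵥ x j = G.diag i * G.diag j := fun i j =>
    congrFun (congrFun (hGsym.eq_vecMulVec_diag hrank.le) i) j
  have hu : G.diag ≠ 0 := fun h => by
    rw [hGsym.eq_vecMulVec_diag hrank.le, h, vecMulVec_zero, rank_zero] at hrank
    exact zero_ne_one hrank
  obtain ⟨p, hp⟩ :=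
    (Gamma.reachable_of_gram_eq_vecMulVec A B hli hB hu hG htr).exists_walk_length_eq_dist
  simpa [hp] using Gamma.card_add_two_le_length A B hli hB hu hG p

/-- If `B − A = ∑ xᵢxᵢᵀ` with `2 ≤ r ≤ n`, the `xᵢ` linearly independent, and the matrix
`[xᵢᵀ A⁻¹ xⱼ]` of rank one and trace zero, then `d(A,B) ≥ r + 2` in `Γ_n`. -/
theorem dist_ge_of_gram_rank_one_trace_zero {n r : ℕ} (hr2 : 2 ≤ r) (hrn : r ≤ n)
    (A B : {A : Matrix (Fin n) (Fin n) (ZMod 2) // A.IsSymm ∧ IsUnit A})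
    (x : Fin r → Fin n → ZMod 2) (hli : LinearIndependent (ZMod 2) x)
    (hB : B.1 - A.1 = ∑ i, vecMulVec (x i) (x i))
    (hrank : (Matrix.of fun i j : Fin r => x i ⬝ᵥ (A.1)⁻¹ *ᵥ x j).rank = 1)
    (htr : (Matrix.of fun i j : Fin r => x i ⬝ᵥ (A.1)⁻¹ *ᵥ x j).trace = 0) :
    r + 2 ≤ (Gamma n).dist A B :=
  dist_ge_of_gram_rank_one_trace_zero_general A B x hli hB hrank htr
end
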